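/- arXiv:2404.08402 — 10 statements merged into one kernel-verified Lean document; each statement's English description precedes it below -/
import Mathlib

section
/- Let F be a finite field and λ₁ ≠ λ₂ be two nonzero elements of F. If a linear subspace C of Fⁿ × Fⁿ is simultaneously a 2-quasi λ₁-constacyclic code and a 2-quasi λ₂-constacyclic code, then the projection of C onto the first n coordinates is either {0} or all of Fⁿ (and likewise for the second projection). -/
/-!
Put `D = ρᵢ(C)`; it is invariant under both shifts `T₁ = cshift λ₁` and `T₂ = cshift λ₂`, and
`T₁ a - T₂ a = (λ₁ - λ₂) a₋₁ e₀`. A nonzero `a ∈ D` can be moved by powers of `T₁` (which only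
rescale coordinates by `1` or `λ₁ ≠ 0`) until its last coordinate is nonzero, so `e₀ ∈ D`, and
then `T₁ᵏ e₀ ∈ F^× eₖ` gives every standard basis vector.
-/

/-- The `λ`-constacyclic shift on `Fⁿ`. -/
def cshift {F : Type*} [Field F] {n : ℕ} [NeZero n] (lam : F) (a : Fin n → F) :
    Fin n → F :=
  fun i => (if i = 0 then lam else 1) * a (i - 1)

open scoped Fin.NatCast Fin.IntCast Fin.CommRing

theorem Fin.add_one_induction {n : ℕ} [NeZero n] {P : Fin n → Prop} {j : Fin n} (hj : P j)
    (hstep : ∀ i, P i → P (i + 1)) (i : Fin n) : P i := by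
  have hP : ∀ k : ℕ, P (j + k) := by
    intro k
    induction k with
    | zero => simpa using hj
    | succ k ih => simpa [add_assoc] using hstep _ ih
  simpa using hP (i - j).val

section cshift

variable {F : Type*} [Field F] {n : ℕ} [NeZero n]

theorem cshift_apply_add_one (lam : F) (a : Fin n → F) (i : Fin n) :
    cshift lam a (i + 1) = (if i + 1 = 0 then lam else 1) * a i := by
  simp [cshift]

theorem cshift_apply_add_one_ne_zero {lam : F} (hlam : lam ≠ 0) {a : Fin n → F} {i : Fin n}
    (ha : a i ≠ 0) : cshift lam a (i + 1) ≠ 0 := by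
  rw [cshift_apply_add_one]
  exact mul_ne_zero (by split_ifs <;> simp [hlam]) ha

theorem cshift_single (lam c : F) (m : Fin n) :
    cshift lam (Pi.single m c) = Pi.single (m + 1) ((if m + 1 = 0 then lam else 1) * c) := by
  funext i
  obtain ⟨i, rfl⟩ : ∃ i', i = i' + 1 := ⟨i - 1, by ring⟩
  rw [cshift_apply_add_one]
  rcases eq_or_ne i m with rfl | h
  · simp
  · simp [h]

theorem cshift_sub_cshift (lam₁ lam₂ : F) (a : Fin n → F) :
    cshift lam₁ a - cshift lam₂ a = Pi.single 0 ((lam₁ - lam₂) * a (-1)) := by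
  funext i
  rcases eq_or_ne i 0 with rfl | h
  · simp [cshift, sub_mul]
  · simp [cshift, h]

theorem eq_bot_or_eq_top_of_cshift_mem {lam₁ lam₂ : F} (h1 : lam₁ ≠ 0) (hne : lam₁ ≠ lam₂)
    (D : Submodule F (Fin n → F)) (hD1 : ∀ a ∈ D, cshift lam₁ a ∈ D)
    (hD2 : ∀ a ∈ D, cshift lam₂ a ∈ D) : D = ⊥ ∨ D = ⊤ := by
  refine or_iff_not_imp_left.2 fun hbot => ?_
  obtain ⟨a, haD, ha0⟩ := (Submodule.ne_bot_iff D).1 hbot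
  obtain ⟨j, hj⟩ := Function.ne_iff.1 ha0
  obtain ⟨b, hbD, hb⟩ : ∃ b ∈ D, b (-1) ≠ 0 :=
    Fin.add_one_induction (P := fun i => ∃ b ∈ D, b i ≠ 0) ⟨a, haD, hj⟩
      (fun _ ⟨b, hbD, hb⟩ => ⟨_, hD1 b hbD, cshift_apply_add_one_ne_zero h1 hb⟩) _
  have hunit : (lam₁ - lam₂) * b (-1) ≠ 0 := mul_ne_zero (sub_ne_zero_of_ne hne) hb
  have he₀ : Pi.single (0 : Fin n) (1 : F) ∈ D := by
    have hmem := D.smul_mem ((lam₁ - lam₂) * b (-1))⁻¹ (sub_mem (hD1 b hbD) (hD2 b hbD))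
    rwa [cshift_sub_cshift, ← Pi.single_smul, smul_eq_mul, inv_mul_cancel₀ hunit] at hmem
  have hsingle : ∀ i : Fin n, Pi.single i (1 : F) ∈ D := by
    refine Fin.add_one_induction he₀ fun i hi => ?_
    have hc : (if i + 1 = 0 then lam₁ else 1) ≠ 0 := by split_ifs <;> simp [h1]
    have hmem := D.smul_mem (if i + 1 = 0 then lam₁ else 1)⁻¹ (hD1 _ hi)
    rwa [cshift_single, ← Pi.single_smul, smul_eq_mul, mul_one, inv_mul_cancel₀ hc] at hmem
  rw [eq_top_iff, ← (Pi.basisFun F (Fin n)).span_eq, Submodule.span_le]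
  rintro _ ⟨i, rfl⟩
  simpa using hsingle i

end cshift

theorem Submodule.map_mem_of_semiconj {R M N : Type*} [Semiring R] [AddCommMonoid M]
    [AddCommMonoid N] [Module R M] [Module R N] {C : Submodule R M} (f : M →ₗ[R] N)
    {g : M → M} {h : N → N} (hfg : ∀ x, f (g x) = h (f x)) (hC : ∀ c ∈ C, g c ∈ C) :
    ∀ a ∈ C.map f, h a ∈ C.map f := by
  rintro _ ⟨c, hc, rfl⟩
  exact ⟨g c, hC c hc, hfg c⟩

theorem stmt_0_general {F : Type*} [Field F] {n : ℕ} [NeZero n]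
    (lam₁ lam₂ : F) (h1 : lam₁ ≠ 0) (hne : lam₁ ≠ lam₂)
    (C : Submodule F ((Fin n → F) × (Fin n → F)))
    (hC1 : ∀ c ∈ C, (cshift lam₁ c.1, cshift lam₁ c.2) ∈ C)
    (hC2 : ∀ c ∈ C, (cshift lam₂ c.1, cshift lam₂ c.2) ∈ C) :
    (C.map (LinearMap.fst F (Fin n → F) (Fin n → F)) = ⊥ ∨
       C.map (LinearMap.fst F (Fin n → F) (Fin n → F)) = ⊤) ∧
    (C.map (LinearMap.snd F (Fin n → F) (Fin n → F)) = ⊥ ∨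
       C.map (LinearMap.snd F (Fin n → F) (Fin n → F)) = ⊤) :=
  ⟨eq_bot_or_eq_top_of_cshift_mem h1 hne _
      (Submodule.map_mem_of_semiconj _ (fun _ => rfl) hC1)
      (Submodule.map_mem_of_semiconj _ (fun _ => rfl) hC2),
    eq_bot_or_eq_top_of_cshift_mem h1 hne _
      (Submodule.map_mem_of_semiconj _ (fun _ => rfl) hC1)
      (Submodule.map_mem_of_semiconj _ (fun _ => rfl) hC2)⟩

theorem stmt_0 {F : Type*} [Field F] [Fintype F] {n : ℕ} [NeZero n]
    (lam₁ lam₂ : F) (h1 : lam₁ ≠ 0) (h2 : lam₂ ≠ 0) (hne : lam₁ ≠ lam₂)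
    (C : Submodule F ((Fin n → F) × (Fin n → F)))
    (hC1 : ∀ c ∈ C, (cshift lam₁ c.1, cshift lam₁ c.2) ∈ C)
    (hC2 : ∀ c ∈ C, (cshift lam₂ c.1, cshift lam₂ c.2) ∈ C) :
    (C.map (LinearMap.fst F (Fin n → F) (Fin n → F)) = ⊥ ∨
       C.map (LinearMap.fst F (Fin n → F) (Fin n → F)) = ⊤) ∧
    (C.map (LinearMap.snd F (Fin n → F) (Fin n → F)) = ⊥ ∨
       C.map (LinearMap.snd F (Fin n → F) (Fin n → F)) = ⊤) :=
  stmt_0_general lam₁ lam₂ h1 hne C hC1 hC2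
end

section
/- Let F be a finite field of cardinality p^ℓ, 0 ≤ h < ℓ, λ ∈ F^× and t the order of λ in F^×. If C ⊆ Fⁿ × Fⁿ is a 2-quasi λ-constacyclic code, then its Galois p^h-dual code C^{⊥h} is a 2-quasi λ^{-p^{ℓ-h}}-constacyclic code. In particular, for h = 0 the Euclidean dual C^⊥ is a 2-quasi λ^{-1}-constacyclic code. -/
/-- The Galois inner product `⟨a,b⟩ = ∑ aᵢ bᵢ^e` on `Fⁿ × Fⁿ`, where `e = p^h`. -/
def gin {F : Type*} [Field F] {n : ℕ} (e : ℕ)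
    (a b : (Fin n → F) × (Fin n → F)) : F :=
  (∑ i, a.1 i * b.1 i ^ e) + (∑ i, a.2 i * b.2 i ^ e)

lemma cshift_inj {F : Type*} [Field F] {n : ℕ} [NeZero n] {lam : F} (hlam : lam ≠ 0) :
    Function.Injective (cshift (n := n) lam) := by
  intro a b hab
  funext j
  have := congrFun hab (j + 1)
  simp only [cshift, add_sub_cancel_right] at this
  rcases eq_or_ne (j + 1) (0 : Fin n) with h | h
  · simpa [h, hlam] using this
  · simpa [h] using this

lemma sum_shift {F : Type*} [Field F] {n : ℕ} [NeZero n] (e : ℕ) {lam mu : F}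
    (h1 : lam * mu ^ e = 1) (c a : Fin n → F) :
    ∑ i, cshift lam c i * cshift mu a i ^ e = ∑ i, c i * a i ^ e := by
  have key : ∀ i : Fin n, cshift lam c i * cshift mu a i ^ e = c (i - 1) * a (i - 1) ^ e := by
    intro i
    simp only [cshift]
    split
    · rw [mul_pow]
      calc lam * c (i-1) * ((mu ^ e) * a (i-1) ^ e)
          = (lam * mu ^ e) * (c (i-1) * a (i-1) ^ e) := by ring
        _ = c (i-1) * a (i-1) ^ e := by rw [h1, one_mul]
    · ring
  rw [Finset.sum_congr rfl (fun i _ => key i)]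
  exact Fintype.sum_equiv (Equiv.subRight (1 : Fin n)) _ _ (fun i => rfl)

theorem stmt_1 {F : Type*} [Field F] [Fintype F] {p ℓ h n : ℕ} [NeZero n]
    (hp : p.Prime) (hcard : Fintype.card F = p ^ ℓ) (hh : h < ℓ)
    (lam : F) (hlam : lam ≠ 0)
    (C : Submodule F ((Fin n → F) × (Fin n → F)))
    (hC : ∀ c ∈ C, (cshift lam c.1, cshift lam c.2) ∈ C) :
    ∀ a ∈ {x : (Fin n → F) × (Fin n → F) | ∀ c ∈ C, gin (p ^ h) c x = 0},
      (cshift (lam⁻¹ ^ p ^ (ℓ - h)) a.1, cshift (lam⁻¹ ^ p ^ (ℓ - h)) a.2) ∈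
        {x : (Fin n → F) × (Fin n → F) | ∀ c ∈ C, gin (p ^ h) c x = 0} := by
  intro a ha c hc
  -- the key scalar identity
  have hmu : lam * (lam⁻¹ ^ p ^ (ℓ - h)) ^ p ^ h = 1 := by
    rw [← pow_mul, ← pow_add, Nat.sub_add_cancel hh.le, ← hcard, FiniteField.pow_card,
      mul_inv_cancel₀ hlam]
  -- the shift map is a bijection of C onto itself
  set f : ((Fin n → F) × (Fin n → F)) → ((Fin n → F) × (Fin n → F)) :=
    fun x => (cshift lam x.1, cshift lam x.2) with hf
  have hinj : Function.Injective f := by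
    intro x y hxy
    have h1 := congrArg Prod.fst hxy
    have h2 := congrArg Prod.snd hxy
    exact Prod.ext (cshift_inj hlam h1) (cshift_inj hlam h2)
  have hfin : (C : Set ((Fin n → F) × (Fin n → F))).Finite := Set.toFinite _
  have hmaps : Set.MapsTo f (C : Set _) (C : Set _) := fun x hx => hC x hx
  have hbij : Set.BijOn f (C : Set _) (C : Set _) :=
    (hfin.injOn_iff_bijOn_of_mapsTo hmaps).mp (hinj.injOn)
  obtain ⟨c', hc', hfc'⟩ := hbij.surjOn hc
  have hc'0 : gin (p ^ h) c' a = 0 := ha c' hc'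
  have : gin (p ^ h) c (cshift (lam⁻¹ ^ p ^ (ℓ - h)) a.1, cshift (lam⁻¹ ^ p ^ (ℓ - h)) a.2)
      = gin (p ^ h) c' a := by
    rw [← hfc']
    simp only [gin, hf]
    rw [sum_shift _ hmu, sum_shift _ hmu]
  rw [this, hc'0]
end

section
/- Let F be a finite field of cardinality p^ℓ, 0 ≤ h < ℓ, and λ ∈ F^× with λ^{1+p^h} = 1, t the order of λ. Define, for a(X) = Σ aᵢXⁱ in R_λ = F[X]/⟨Xⁿ − λ⟩, a*(X) := Σ aᵢ^{p^h} X^{(nt−1)i} mod (Xⁿ − λ). Then the map a ↦ a* is a ring automorphism of R_λ that is σ_{p^h}-semilinear, i.e., (αa)* = α^{p^h} a* for α ∈ F, and it satisfies a*(P_λ) = (a(P_λ))^{*h}. -/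
open Polynomial Matrix

/-- The quotient ring `R_λ = F[X]/⟨Xⁿ − λ⟩`. -/
abbrev Rlam (F : Type*) [Field F] (n : ℕ) (lam : F) :=
  F[X] ⧸ Ideal.span {(X : F[X]) ^ n - C lam}

/-- The `λ`-constacyclic permutation matrix of degree `n`. -/
def Pmat {F : Type*} [Field F] (n : ℕ) (lam : F) : Matrix (Fin n) (Fin n) F :=
  fun i j => if (i : ℕ) + 1 = (j : ℕ) then 1
    else if (i : ℕ) = n - 1 ∧ (j : ℕ) = 0 then lam else 0

/-!
Let `σ = (·) ^ p ^ h`, a field automorphism of `F`, and `e = n t - 1`. Since `λ ^ t = 1` and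
`λ ^ (1 + p ^ h) = 1`, both `σ λ` and `λ ^ e` are `λ⁻¹`. Hence `a(X) ↦ a^σ(X ^ e)` sends
`Xⁿ - λ` to `(Xⁿ) ^ e - λ ^ e`, a multiple of `Xⁿ - λ`, and descends to `R_λ`; there
`X ^ (n t) = 1`, so `X ^ (e * e) = X` and the same construction with `σ⁻¹` is an inverse.
On the matrix side `P_λ ^ n = λ • 1`, so `P_λ ^ e = P_λ⁻¹`, which is the transpose of
`P_{λ⁻¹} = σ(P_λ)`; as evaluation at a matrix commutes with `σ` and with transposition,
`a*(P_λ) = a^σ(P_λ ^ e) = (a(P_λ))^{*h}`.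
-/

theorem pow_pred_mul_pred_eq_self {M : Type*} [Monoid M] {x : M} {k : ℕ} (hx : x ^ k = 1)
    (hk : k ≠ 0) : x ^ ((k - 1) * (k - 1)) = x := by
  obtain ⟨j, rfl⟩ := Nat.exists_eq_succ_of_ne_zero hk
  calc x ^ ((j + 1 - 1) * (j + 1 - 1)) = x ^ (j * j) * x ^ (j + 1) := by simp [hx]
    _ = (x ^ (j + 1)) ^ j * x := by rw [← pow_mul, ← pow_succ, ← pow_add]; ring_nf
    _ = x := by rw [hx, one_pow, one_mul]

namespace Polynomial

theorem expand_map_eq_sum {R S : Type*} [CommSemiring R] [CommSemiring S] (σ : R →+* S)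
    (e : ℕ) (f : R[X]) : expand S e (f.map σ) = f.sum fun i a => C (σ a) * X ^ (e * i) := by
  rw [coe_expand, eval₂_map, eval₂_eq_sum]
  simp [pow_mul]

section ExpandMapQuot

variable {R : Type*} [CommRing R] {n : ℕ} {c : R}

/-- `a(X) ↦ a^σ(X ^ e)` on `R[X] ⧸ (Xⁿ - c)`, well defined as `Xⁿ - c ∣ (Xⁿ) ^ e - c ^ e`. -/
noncomputable def expandMapQuot (σ : R →+* R) (e : ℕ) (hσ : σ c = c ^ e) :
    R[X] ⧸ Ideal.span {(X : R[X]) ^ n - C c} →+* R[X] ⧸ Ideal.span {(X : R[X]) ^ n - C c} :=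
  Ideal.quotientMap _ ((expand R e : R[X] →+* R[X]).comp (mapRingHom σ)) <| by
    rw [Ideal.span_le, Set.singleton_subset_iff, SetLike.mem_coe, Ideal.mem_comap,
      Ideal.mem_span_singleton]
    convert sub_dvd_pow_sub_pow ((X : R[X]) ^ n) (C c) e using 1
    simp [hσ, ← pow_mul, mul_comm]

theorem expandMapQuot_mk (σ : R →+* R) (e : ℕ) (hσ : σ c = c ^ e) (f : R[X]) :
    expandMapQuot (n := n) σ e hσ (Ideal.Quotient.mk _ f) =
      Ideal.Quotient.mk _ (expand R e (f.map σ)) :=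
  rfl

theorem expandMapQuot_algebraMap (σ : R →+* R) (e : ℕ) (hσ : σ c = c ^ e) (a : R) :
    expandMapQuot (n := n) σ e hσ (algebraMap R _ a) = algebraMap R _ (σ a) := by
  rw [← Ideal.Quotient.mk_algebraMap, expandMapQuot_mk, Polynomial.algebraMap_eq, map_C, expand_C,
    ← Ideal.Quotient.mk_algebraMap, Polynomial.algebraMap_eq]

theorem expandMapQuot_comp_expandMapQuot {σ τ : R →+* R} {e e' : ℕ} (hσ : σ c = c ^ e)
    (hτ : τ c = c ^ e') (hστ : ∀ a, τ (σ a) = a)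
    (hX : (Ideal.Quotient.mk (Ideal.span {(X : R[X]) ^ n - C c}) X) ^ (e' * e) =
      Ideal.Quotient.mk _ X) :
    (expandMapQuot (n := n) τ e' hτ).comp (expandMapQuot σ e hσ) = RingHom.id _ := by
  refine Ideal.Quotient.ringHom_ext (Polynomial.ringHom_ext (fun a => ?_) ?_)
  · simp [expandMapQuot_mk, hστ]
  · simp [expandMapQuot_mk, ← pow_mul, hX]

theorem mk_X_pow_mul_eq_one {m : ℕ} (hc : c ^ m = 1) :
    (Ideal.Quotient.mk (Ideal.span {(X : R[X]) ^ n - C c}) X) ^ (n * m) = 1 := by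
  have hXn : (Ideal.Quotient.mk (Ideal.span {(X : R[X]) ^ n - C c}) X) ^ n =
      Ideal.Quotient.mk _ (C c) := by
    rw [← map_pow, Ideal.Quotient.eq]
    exact Ideal.subset_span rfl
  rw [pow_mul, hXn, ← map_pow, ← C_pow, hc, C_1, map_one]

noncomputable def expandMapQuotEquiv (σ : R ≃+* R) {m : ℕ} (hnm : n * m ≠ 0)
    (hc : c ^ m = 1) (hσ : σ c = c ^ (n * m - 1)) :
    R[X] ⧸ Ideal.span {(X : R[X]) ^ n - C c} ≃+* R[X] ⧸ Ideal.span {(X : R[X]) ^ n - C c} :=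
  have hX := pow_pred_mul_pred_eq_self (mk_X_pow_mul_eq_one (n := n) hc) hnm
  have hσ' : σ.symm c = c ^ (n * m - 1) := σ.symm_apply_eq.mpr <| by
    rw [map_pow, hσ, ← pow_mul, pow_pred_mul_pred_eq_self (by rw [pow_mul', hc, one_pow]) hnm]
  RingEquiv.ofRingHom (expandMapQuot (σ : R →+* R) _ hσ)
    (expandMapQuot (σ.symm : R →+* R) _ hσ')
    (expandMapQuot_comp_expandMapQuot hσ' hσ σ.apply_symm_apply hX)
    (expandMapQuot_comp_expandMapQuot hσ hσ' σ.symm_apply_apply hX)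

variable (σ : R ≃+* R) {m : ℕ} (hnm : n * m ≠ 0) (hc : c ^ m = 1)
  (hσ : σ c = c ^ (n * m - 1))

theorem expandMapQuotEquiv_mk (f : R[X]) :
    expandMapQuotEquiv σ hnm hc hσ (Ideal.Quotient.mk _ f) =
      Ideal.Quotient.mk _ (expand R (n * m - 1) (f.map (σ : R →+* R))) :=
  rfl

theorem expandMapQuotEquiv_algebraMap (a : R) :
    expandMapQuotEquiv σ hnm hc hσ (algebraMap R _ a) = algebraMap R _ (σ a) :=
  expandMapQuot_algebraMap (σ : R →+* R) _ hσ a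

end ExpandMapQuot

end Polynomial

namespace Matrix

variable {m R S : Type*} [Fintype m] [DecidableEq m] [CommSemiring R] [CommSemiring S]

theorem transpose_aeval (M : Matrix m m R) (f : R[X]) : (aeval M f)ᵀ = aeval Mᵀ f := by
  have := aeval_algHom_apply (transposeAlgEquiv m R R) M f
  rw [transposeAlgEquiv_apply, transposeAlgEquiv_apply, aeval_op_apply] at this
  exact (MulOpposite.op_injective this).symm

theorem map_aeval (σ : R →+* S) (M : Matrix m m R) (f : R[X]) :
    (aeval M f).map σ = aeval (M.map σ) (f.map σ) :=
  map_aeval_eq_aeval_map (ψ := σ.mapMatrix)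
    (by ext; simp [algebraMap_eq_diagonal, diagonal_apply, apply_ite σ]) f M

end Matrix

section Pmat

variable {F K : Type*} [Field F] [Field K] {n : ℕ}

theorem pmat_map (σ : F →+* K) (lam : F) : (Pmat n lam).map σ = Pmat n (σ lam) := by
  ext i j
  simp only [map_apply, Pmat]
  split_ifs <;> simp

theorem mul_pmat_apply (lam : F) (A : Matrix (Fin n) (Fin n) F) (i j : Fin n) :
    (A * Pmat n lam) i j =
      if (j : ℕ) = 0 then A i ⟨n - 1, Nat.sub_one_lt_of_lt j.isLt⟩ * lam
      else A i ⟨j - 1, (j.val.sub_le 1).trans_lt j.isLt⟩ := by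
  rw [mul_apply]
  split_ifs with hj
  · refine (Fintype.sum_eq_single ⟨n - 1, Nat.sub_one_lt_of_lt j.isLt⟩ fun k hk => ?_).trans ?_
    · have : (k : ℕ) ≠ n - 1 := fun h => hk (Fin.ext h)
      simp [Pmat, hj, this]
    · simp [Pmat, hj]
  · refine (Fintype.sum_eq_single ⟨j - 1, (j.val.sub_le 1).trans_lt j.isLt⟩
      fun k hk => ?_).trans ?_
    · have : (k : ℕ) + 1 ≠ j := fun h => hk (Fin.ext (by simp; omega))
      simp [Pmat, hj, this]
    · simp [Pmat, hj]; omega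

theorem pmat_pow_apply_of_le (lam : F) {k : ℕ} (hk : k ≤ n) (i j : Fin n) :
    (Pmat n lam ^ k) i j =
      if (i : ℕ) + k = j then 1 else if (i : ℕ) + k = j + n then lam else 0 := by
  have := i.isLt
  induction k generalizing j with
  | zero =>
    have := j.isLt
    simp only [pow_zero, one_apply, Fin.ext_iff, add_zero]
    split_ifs <;> first | rfl | omega
  | succ k ih =>
    have := j.isLt
    rw [pow_succ, mul_pmat_apply]
    split_ifs <;> simp only [ih (by omega)] <;> split_ifs <;> first | omega | simp

theorem pmat_pow_self (lam : F) : Pmat n lam ^ n = lam • (1 : Matrix (Fin n) (Fin n) F) := by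
  ext i j
  simp only [pmat_pow_apply_of_le lam le_rfl, Matrix.smul_apply, one_apply, Fin.ext_iff]
  split_ifs <;> first | omega | simp

theorem pmat_pow_mul_eq_one {lam : F} {m : ℕ} (hm : lam ^ m = 1) : Pmat n lam ^ (n * m) = 1 := by
  rw [pow_mul, pmat_pow_self, _root_.smul_pow, hm, one_pow, one_smul]

theorem transpose_pmat_mul_pmat {lam μ : F} (h : μ * lam = 1) :
    (Pmat n μ)ᵀ * Pmat n lam = 1 := by
  ext i j
  have := i.isLt; have := j.isLt
  simp only [mul_pmat_apply, one_apply, Fin.ext_iff, transpose_apply, Pmat, true_and]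
  split_ifs <;> first | omega | simp

theorem pmat_pow_mul_pred {lam μ : F} {m : ℕ} (hm : lam ^ m = 1) (hnm : n * m ≠ 0)
    (h : μ * lam = 1) : Pmat n lam ^ (n * m - 1) = (Pmat n μ)ᵀ := by
  calc Pmat n lam ^ (n * m - 1) = (Pmat n μ)ᵀ * Pmat n lam * Pmat n lam ^ (n * m - 1) := by
        rw [transpose_pmat_mul_pmat h, one_mul]
    _ = (Pmat n μ)ᵀ := by
        rw [mul_assoc, ← pow_succ', Nat.sub_add_cancel (Nat.one_le_iff_ne_zero.mpr hnm),
          pmat_pow_mul_eq_one hm, mul_one]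

end Pmat

theorem stmt_5_general {F : Type*} [Field F] [Fintype F] {p ℓ h n : ℕ} [NeZero n]
    (hp : p.Prime) (hcard : Fintype.card F = p ^ ℓ)
    (lam : F) (hlam1 : lam ^ (1 + p ^ h) = 1) :
    ∃ ψ : Rlam F n lam ≃+* Rlam F n lam,
      (∀ f : F[X],
        ψ (Ideal.Quotient.mk _ f) =
          Ideal.Quotient.mk _
            (f.sum fun i a => C (a ^ p ^ h) * X ^ ((n * orderOf lam - 1) * i))) ∧
      (∀ (α : F) (a : Rlam F n lam),
        ψ (algebraMap F (Rlam F n lam) α * a) =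
          algebraMap F (Rlam F n lam) (α ^ p ^ h) * ψ a) ∧
      (∀ f : F[X],
        aeval (Pmat n lam)
            (f.sum fun i a => C (a ^ p ^ h) * X ^ ((n * orderOf lam - 1) * i)) =
          ((aeval (Pmat n lam) f).map (fun x => x ^ p ^ h))ᵀ) := by
  have := Fact.mk hp
  have := charP_of_card_eq_prime_pow hcard
  let σ := iterateFrobeniusEquiv F p h
  have hσ_inv : σ lam * lam = 1 := by
    rw [iterateFrobeniusEquiv_def, ← pow_succ, add_comm, hlam1]
  have hfin : IsOfFinOrder lam := isOfFinOrder_iff_pow_eq_one.mpr ⟨_, by positivity, hlam1⟩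
  have hnt : n * orderOf lam ≠ 0 := mul_ne_zero (NeZero.ne n) hfin.orderOf_pos.ne'
  have hσ : σ lam = lam ^ (n * orderOf lam - 1) := left_inv_eq_right_inv hσ_inv <| by
    rw [← pow_succ', Nat.sub_add_cancel (Nat.one_le_iff_ne_zero.mpr hnt), pow_mul',
      pow_orderOf_eq_one, one_pow]
  have hσ_apply : ⇑(σ : F →+* F) = fun x => x ^ p ^ h :=
    funext (iterateFrobeniusEquiv_def F p h)
  have hsum (f : F[X]) : (f.sum fun i a => C (a ^ p ^ h) * X ^ ((n * orderOf lam - 1) * i)) =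
      expand F (n * orderOf lam - 1) (f.map (σ : F →+* F)) := by
    rw [expand_map_eq_sum, hσ_apply]
  refine ⟨expandMapQuotEquiv σ hnt (pow_orderOf_eq_one lam) hσ,
    fun f => ?_, fun α a => ?_, fun f => ?_⟩
  · rw [hsum, expandMapQuotEquiv_mk]
  · rw [map_mul, expandMapQuotEquiv_algebraMap, iterateFrobeniusEquiv_def]
  · rw [← hσ_apply, hsum, expand_aeval, pmat_pow_mul_pred (pow_orderOf_eq_one lam) hnt hσ_inv,
      map_aeval, pmat_map, transpose_aeval, RingEquiv.coe_toRingHom]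

theorem stmt_5 {F : Type*} [Field F] [Fintype F] {p ℓ h n : ℕ} [NeZero n]
    (hp : p.Prime) (hcard : Fintype.card F = p ^ ℓ) (hh : h < ℓ)
    (lam : F) (hlam : lam ≠ 0) (hlam1 : lam ^ (1 + p ^ h) = 1) :
    ∃ ψ : Rlam F n lam ≃+* Rlam F n lam,
      (∀ f : F[X],
        ψ (Ideal.Quotient.mk _ f) =
          Ideal.Quotient.mk _
            (f.sum fun i a => C (a ^ p ^ h) * X ^ ((n * orderOf lam - 1) * i))) ∧
      (∀ (α : F) (a : Rlam F n lam),
        ψ (algebraMap F (Rlam F n lam) α * a) =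
          algebraMap F (Rlam F n lam) (α ^ p ^ h) * ψ a) ∧
      (∀ f : F[X],
        aeval (Pmat n lam)
            (f.sum fun i a => C (a ^ p ^ h) * X ^ ((n * orderOf lam - 1) * i)) =
          ((aeval (Pmat n lam) f).map (fun x => x ^ p ^ h))ᵀ) :=
  stmt_5_general hp hcard lam hlam1
end

section
/- Let F be a finite field with gcd(n, q) = 1, q = |F|, λ ∈ F^×, and R = F[X]/⟨Xⁿ − λ⟩. If C is an R-submodule of R² = R × R, then there exist ideals C₁, C₂, C₁₂ of R with C₁ ∩ C₁₂ = C₂ ∩ C₁₂ = 0 and an element g which is a unit of the ring C₁₂ (with identity the idempotent generating C₁₂), such that C = (C₁ × C₂) ⊕ {(c, cg) : c ∈ C₁₂}. Conversely, any such data defines an R-submodule of R². -/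
/-!
Since `gcd(n, q) = 1`, `Xⁿ - λ` is separable, so `R` is reduced and finite-dimensional over `F`,
hence semisimple. Given a submodule `C` of `R²`, put `C₁ = {a | (a, 0) ∈ C}`,
`C₂ = {b | (0, b) ∈ C}` and let `I` be the first projection of `C`. Semisimplicity provides an
idempotent `e` with `I = C₁ ⊕ Re`; lifting `e` to `(e, g) ∈ C` puts the whole graph
`{(c, c g) : c ∈ Re}` inside `C`. Multiplication by `g` is injective on `Re`, since its kernel
lands in `C₁ ∩ Re = 0`, hence bijective because `Re` is Artinian: `g` is a unit of `Re`, and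
this in turn forces `C₂ ∩ Re = 0`.
-/

open Polynomial

set_option synthInstance.maxHeartbeats 1000000

theorem IsIdempotentElem.mul_eq_self_of_mem_span {R : Type*} [CommRing R] {e c : R}
    (he : IsIdempotentElem e) (hc : c ∈ Ideal.span {e}) : c * e = c := by
  obtain ⟨d, rfl⟩ := Ideal.mem_span_singleton'.mp hc
  rw [mul_assoc, he.eq]

namespace Submodule

variable {R : Type*} [CommRing R]

/-- The paper's `(C₁ × C₂) ⊕ {(c, c g) : c ∈ C₁₂}`. -/
def prodSupGraph (C₁ C₂ C₁₂ : Ideal R) (g : R) : Submodule R (R × R) :=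
  Submodule.prod C₁ C₂ ⊔ map (LinearMap.id.prod (LinearMap.mulRight R g)) C₁₂

theorem mem_prodSupGraph {C₁ C₂ C₁₂ : Ideal R} {g : R} {x : R × R} :
    x ∈ prodSupGraph C₁ C₂ C₁₂ g ↔
      ∃ c₁ ∈ C₁, ∃ c₂ ∈ C₂, ∃ c ∈ C₁₂, x = (c₁ + c, c₂ + c * g) := by
  simp only [prodSupGraph, mem_sup, mem_prod, mem_map, LinearMap.prod_apply]
  constructor
  · rintro ⟨y, ⟨hy₁, hy₂⟩, _, ⟨c, hc, rfl⟩, rfl⟩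
    exact ⟨y.1, hy₁, y.2, hy₂, c, hc, rfl⟩
  · rintro ⟨c₁, hc₁, c₂, hc₂, c, hc, rfl⟩
    exact ⟨(c₁, c₂), ⟨hc₁, hc₂⟩, _, ⟨c, hc, rfl⟩, rfl⟩

variable (C : Submodule R (R × R)) {e g : R}

theorem mk_mul_mem_of_mem_span_idempotent (he : IsIdempotentElem e) (heg : (e, g) ∈ C) {c : R}
    (hc : c ∈ Ideal.span {e}) : (c, c * g) ∈ C := by
  simpa [he.mul_eq_self_of_mem_span hc] using C.smul_mem c heg

theorem eq_zero_of_mul_eq_zero_of_disjoint (he : IsIdempotentElem e) (heg : (e, g) ∈ C)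
    (hdisj : Disjoint (C.comap (LinearMap.inl R R R)) (Ideal.span {e})) {d : R}
    (hd : d ∈ Ideal.span {e}) (hdg : d * g = 0) : d = 0 := by
  refine disjoint_def.mp hdisj d ?_ hd
  simpa [hdg] using C.mk_mul_mem_of_mem_span_idempotent he heg hd

theorem exists_mul_eq_of_disjoint [IsArtinianRing R] (he : IsIdempotentElem e) (heg : (e, g) ∈ C)
    (hdisj : Disjoint (C.comap (LinearMap.inl R R R)) (Ideal.span {e})) :
    ∃ g' ∈ Ideal.span {e}, g * g' = e := by
  let mulG : Ideal.span {e} →ₗ[R] Ideal.span {e} :=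
    (LinearMap.mulLeft R g).restrict fun _ hx => Ideal.mul_mem_left _ g hx
  have hinj : Function.Injective mulG := by
    rw [← LinearMap.ker_eq_bot, LinearMap.ker_eq_bot']
    intro d hd
    refine Subtype.ext (C.eq_zero_of_mul_eq_zero_of_disjoint he heg hdisj d.2 ?_)
    have hgd : g * d = 0 := congrArg Subtype.val hd
    rwa [mul_comm] at hgd
  obtain ⟨g', hg'⟩ := IsArtinian.surjective_of_injective_endomorphism mulG hinj
    ⟨e, Ideal.mem_span_singleton_self e⟩
  exact ⟨g', g'.2, congrArg Subtype.val hg'⟩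

theorem disjoint_comap_inr (he : IsIdempotentElem e) (heg : (e, g) ∈ C) {g' : R}
    (hgg' : g * g' = e)
    (hdisj : Disjoint (C.comap (LinearMap.inl R R R)) (Ideal.span {e})) :
    Disjoint (C.comap (LinearMap.inr R R R)) (Ideal.span {e}) := by
  refine disjoint_def.mpr fun b hb₂ hb => ?_
  have hu : b * g' ∈ Ideal.span {e} := Ideal.mul_mem_right _ _ hb
  have hug : b * g' * g = b := by
    rw [mul_assoc, mul_comm g', hgg', he.mul_eq_self_of_mem_span hb]
  have hu₁ : (b * g', (0 : R)) ∈ C := by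
    simpa [hug] using C.sub_mem (C.mk_mul_mem_of_mem_span_idempotent he heg hu) hb₂
  rw [← hug, disjoint_def.mp hdisj (b * g') hu₁ hu, zero_mul]

theorem eq_prodSupGraph (he : IsIdempotentElem e) (heg : (e, g) ∈ C)
    (hsup : C.comap (LinearMap.inl R R R) ⊔ Ideal.span {e} = C.map (LinearMap.fst R R R)) :
    C = prodSupGraph (C.comap (LinearMap.inl R R R)) (C.comap (LinearMap.inr R R R))
      (Ideal.span {e}) g := by
  refine le_antisymm (fun x hx => ?_) ?_
  · have hx₁ : x.1 ∈ C.comap (LinearMap.inl R R R) ⊔ Ideal.span {e} :=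
      hsup ▸ mem_map_of_mem (f := LinearMap.fst R R R) hx
    obtain ⟨c₁, hc₁, c, hc, hx₁⟩ := mem_sup.mp hx₁
    refine mem_prodSupGraph.mpr ⟨c₁, hc₁, x.2 - c * g, ?_, c, hc, ?_⟩
    · rw [mem_comap]
      convert C.sub_mem (C.sub_mem hx hc₁) (C.mk_mul_mem_of_mem_span_idempotent he heg hc) using 1
      ext <;> simp [← hx₁]
    · ext <;> simp [hx₁]
  · refine sup_le (fun x ⟨hx₁, hx₂⟩ => ?_) (map_le_iff_le_comap.mpr fun c hc => ?_)
    · simpa using C.add_mem hx₁ hx₂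
    · exact C.mk_mul_mem_of_mem_span_idempotent he heg hc

theorem exists_eq_prodSupGraph [IsSemisimpleRing R] :
    ∃ e g g' : R, IsIdempotentElem e ∧
      Disjoint (C.comap (LinearMap.inl R R R)) (Ideal.span {e}) ∧
      Disjoint (C.comap (LinearMap.inr R R R)) (Ideal.span {e}) ∧
      g ∈ Ideal.span {e} ∧ g' ∈ Ideal.span {e} ∧ g * g' = e ∧
      C = prodSupGraph (C.comap (LinearMap.inl R R R)) (C.comap (LinearMap.inr R R R))
        (Ideal.span {e}) g := by
  have hle : C.comap (LinearMap.inl R R R) ≤ C.map (LinearMap.fst R R R) :=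
    fun a ha => ⟨(a, 0), ha, rfl⟩
  obtain ⟨J, hdisj, hsup⟩ := IsModularLattice.exists_disjoint_and_sup_eq hle
  obtain ⟨e, he, rfl⟩ := IsSemisimpleRing.ideal_eq_span_idempotent J
  obtain ⟨y, hy, hye⟩ : e ∈ C.map (LinearMap.fst R R R) :=
    hsup ▸ mem_sup_right (Ideal.mem_span_singleton_self e)
  have heg : (e, e * y.2) ∈ C := by
    convert C.smul_mem e hy using 1
    rw [LinearMap.fst_apply] at hye
    ext <;> simp [hye, he.eq]
  obtain ⟨g', hg', hgg'⟩ := C.exists_mul_eq_of_disjoint he heg hdisj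
  exact ⟨e, e * y.2, g', he, hdisj, C.disjoint_comap_inr he heg hgg' hdisj,
    Ideal.mul_mem_right _ _ (Ideal.mem_span_singleton_self e), hg', hgg',
    C.eq_prodSupGraph he heg hsup⟩

end Submodule

theorem isSemisimpleRing_quotient_span_of_squarefree {K : Type*} [Field K] {f : K[X]}
    (hf : Squarefree f) : IsSemisimpleRing (K[X] ⧸ Ideal.span {f}) :=
  have : IsReduced (K[X] ⧸ Ideal.span {f}) :=
    (Ideal.isRadical_iff_quotient_reduced _).mp (isRadical_iff_span_singleton.mp hf.isRadical)
  have : Module.Finite K (AdjoinRoot f) := (AdjoinRoot.powerBasis hf.ne_zero).finite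
  have : IsArtinianRing (K[X] ⧸ Ideal.span {f}) := .of_finite K (AdjoinRoot f)
  IsArtinianRing.isSemisimpleRing_of_isReduced _

theorem Polynomial.separable_X_pow_sub_C_of_coprime_card {F : Type*} [Field F] [Fintype F]
    {n : ℕ} (hn : n.Coprime (Fintype.card F)) {lam : F} (hlam : lam ≠ 0) :
    (X ^ n - C lam).Separable := by
  obtain ⟨k, hp, hcard⟩ := FiniteField.card F (ringChar F)
  refine separable_X_pow_sub_C' (ringChar F) n lam (fun hpn => hp.one_lt.ne' ?_) hlam
  exact Nat.eq_one_of_dvd_one (hn ▸ Nat.dvd_gcd hpn (hcard ▸ dvd_pow_self _ k.ne_zero))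

theorem stmt_8 {F : Type*} [Field F] [Fintype F] {n : ℕ}
    (hn : Nat.gcd n (Fintype.card F) = 1) (lam : F) (hlam : lam ≠ 0) :
    (∀ C : Submodule (Rlam F n lam) (Rlam F n lam × Rlam F n lam),
      ∃ (C₁ C₂ C₁₂ : Ideal (Rlam F n lam)) (e g g' : Rlam F n lam),
        C₁ ⊓ C₁₂ = ⊥ ∧ C₂ ⊓ C₁₂ = ⊥ ∧
        e * e = e ∧ C₁₂ = Ideal.span {e} ∧
        g ∈ C₁₂ ∧ g' ∈ C₁₂ ∧ g * g' = e ∧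
        (∀ x : Rlam F n lam × Rlam F n lam,
          x ∈ C ↔ ∃ c₁ ∈ C₁, ∃ c₂ ∈ C₂, ∃ c ∈ C₁₂, x = (c₁ + c, c₂ + c * g))) ∧
    (∀ (C₁ C₂ C₁₂ : Ideal (Rlam F n lam)) (e g g' : Rlam F n lam),
      C₁ ⊓ C₁₂ = ⊥ → C₂ ⊓ C₁₂ = ⊥ →
      e * e = e → C₁₂ = Ideal.span {e} →
      g ∈ C₁₂ → g' ∈ C₁₂ → g * g' = e →
      ∃ D : Submodule (Rlam F n lam) (Rlam F n lam × Rlam F n lam),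
        ∀ x, x ∈ D ↔ ∃ c₁ ∈ C₁, ∃ c₂ ∈ C₂, ∃ c ∈ C₁₂, x = (c₁ + c, c₂ + c * g)) := by
  have : IsSemisimpleRing (Rlam F n lam) := isSemisimpleRing_quotient_span_of_squarefree
    (separable_X_pow_sub_C_of_coprime_card hn hlam).squarefree
  refine ⟨fun C => ?_, fun C₁ C₂ C₁₂ _ g _ _ _ _ _ _ _ _ =>
    ⟨Submodule.prodSupGraph C₁ C₂ C₁₂ g, fun _ => Submodule.mem_prodSupGraph⟩⟩
  obtain ⟨e, g, g', he, h₁, h₂, hg, hg', hgg', hC⟩ := C.exists_eq_prodSupGraph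
  exact ⟨_, _, _, e, g, g', h₁.eq_bot, h₂.eq_bot, he.eq, rfl, hg, hg', hgg',
    fun x => (SetLike.ext_iff.mp hC x).trans Submodule.mem_prodSupGraph⟩
end

section
/- Let F be a finite field of cardinality p^ℓ, 0 ≤ h < ℓ, and λ ∈ F^× with λ^{1+p^h} ≠ 1. Then a linear code C ⊆ Fⁿ × Fⁿ is a Galois p^h-self-dual 2-quasi λ-constacyclic code if and only if C has generating matrix (Eₙ, αEₙ) for some α ∈ F^× with α^{1+p^h} = −1. -/
section

variable {F : Type*} [Field F] {n : ℕ}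

def IsConstacyclic [NeZero n] (lam : F) (S : Set ((Fin n → F) × (Fin n → F))) : Prop :=
  ∀ c ∈ S, (cshift lam c.1, cshift lam c.2) ∈ S

def galoisDual (e : ℕ) (S : Set ((Fin n → F) × (Fin n → F))) :
    Set ((Fin n → F) × (Fin n → F)) :=
  {a | ∀ c ∈ S, gin e c a = 0}

/-- The code with generating matrix `(Eₙ, α Eₙ)`. -/
def smulGraph (α : F) : Set ((Fin n → F) × (Fin n → F)) :=
  {x | x.2 = α • x.1}

theorem mem_smulGraph_iff {α : F} {x : (Fin n → F) × (Fin n → F)} :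
    x ∈ smulGraph α ↔ ∃ u, x = (u, α • u) := by
  simp only [smulGraph, Set.mem_ofPred_eq, Prod.ext_iff, exists_eq_left']

theorem ne_zero_of_pow_one_add_eq_neg_one {α : F} {e : ℕ} (hα : α ^ (1 + e) = -1) : α ≠ 0 := by
  rintro rfl
  simp at hα

section Shift

variable [NeZero n]

theorem cshift_smul (lam α : F) (u : Fin n → F) :
    cshift lam (α • u) = α • cshift lam u := by
  funext i
  simp only [cshift, Pi.smul_apply, smul_eq_mul]
  ring

theorem sum_cshift_mul_cshift_pow (lam : F) (e : ℕ) (u v : Fin n → F) :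
    ∑ i, cshift lam u i * cshift lam v i ^ e =
      ∑ i, u i * v i ^ e + (lam ^ (1 + e) - 1) * (u (-1) * v (-1) ^ e) := by
  have hterm : ∀ i, cshift lam u i * cshift lam v i ^ e = u (i - 1) * v (i - 1) ^ e +
      if i = 0 then (lam ^ (1 + e) - 1) * (u (i - 1) * v (i - 1) ^ e) else 0 := by
    intro i
    by_cases hi : i = 0
    · simp only [cshift, hi, if_true, mul_pow]
      ring
    · simp [cshift, hi]
  simp only [hterm, Finset.sum_add_distrib, Finset.sum_ite_eq', Finset.mem_univ, if_true, zero_sub]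
  congr 1
  exact Fintype.sum_equiv (Equiv.subRight 1) _ _ fun _ => rfl

theorem gin_cshift (lam : F) (e : ℕ) (c a : (Fin n → F) × (Fin n → F)) :
    gin e (cshift lam c.1, cshift lam c.2) (cshift lam a.1, cshift lam a.2) =
      gin e c a + (lam ^ (1 + e) - 1) * (c.1 (-1) * a.1 (-1) ^ e + c.2 (-1) * a.2 (-1) ^ e) := by
  simp only [gin, sum_cshift_mul_cshift_pow]
  ring

open Fin.NatCast Fin.CommRing in
theorem iterate_cshift_apply_neg_one (lam : F) {j : ℕ} (hj : j < n) (u : Fin n → F) :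
    (cshift lam)^[j] u (-1) = u (-1 - j) := by
  induction j generalizing u with
  | zero => simp
  | succ j ih =>
    have hne : (-1 : Fin n) - j ≠ 0 := by
      intro h0
      have hdvd : ((j + 1 : ℕ) : Fin n) = 0 := by
        push_cast
        linear_combination -h0
      rw [Fin.natCast_eq_zero] at hdvd
      exact absurd (Nat.le_of_dvd j.succ_pos hdvd) (by omega)
    rw [Function.iterate_succ_apply, ih (by omega), cshift, if_neg hne, one_mul]
    push_cast
    ring_nf

theorem exists_iterate_cshift_apply_neg_one (lam : F) (i : Fin n) :
    ∃ k : ℕ, ∀ u : Fin n → F, (cshift lam)^[k] u (-1) = u i :=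
  ⟨(-1 - i : Fin n), fun u => by
    rw [iterate_cshift_apply_neg_one lam (Fin.is_lt _), Fin.cast_val_eq_self, sub_sub_cancel]⟩

theorem IsConstacyclic.iterate {lam : F} {S : Set ((Fin n → F) × (Fin n → F))}
    (hS : IsConstacyclic lam S) (k : ℕ) {c : (Fin n → F) × (Fin n → F)} (hc : c ∈ S) :
    ((cshift lam)^[k] c.1, (cshift lam)^[k] c.2) ∈ S := by
  induction k with
  | zero => exact hc
  | succ k ih =>
    simp only [Function.iterate_succ_apply']
    exact hS _ ih

theorem IsConstacyclic.pairing_eq_zero {lam : F} {e : ℕ} {S : Set ((Fin n → F) × (Fin n → F))}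
    (hlam : lam ^ (1 + e) ≠ 1) (hS : IsConstacyclic lam S)
    (hiso : ∀ c ∈ S, ∀ a ∈ S, gin e c a = 0) {c a : (Fin n → F) × (Fin n → F)}
    (hc : c ∈ S) (ha : a ∈ S) (i i' : Fin n) :
    c.1 i * a.1 i' ^ e + c.2 i * a.2 i' ^ e = 0 := by
  have hlast : ∀ c ∈ S, ∀ a ∈ S,
      c.1 (-1) * a.1 (-1) ^ e + c.2 (-1) * a.2 (-1) ^ e = 0 := by
    intro c hc a ha
    have h := hiso _ (hS c hc) _ (hS a ha)
    rw [gin_cshift, hiso c hc a ha, zero_add] at h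
    exact (mul_eq_zero.mp h).resolve_left (sub_ne_zero.mpr hlam)
  obtain ⟨k, hk⟩ := exists_iterate_cshift_apply_neg_one lam i
  obtain ⟨k', hk'⟩ := exists_iterate_cshift_apply_neg_one lam i'
  simpa only [hk, hk'] using hlast _ (hS.iterate k hc) _ (hS.iterate k' ha)

theorem isConstacyclic_smulGraph (lam α : F) : IsConstacyclic lam (smulGraph (n := n) α) := by
  intro c hc
  change cshift lam c.2 = α • cshift lam c.1
  rw [hc, cshift_smul]

end Shift

theorem gin_eq_zero_of_mem_smulGraph {e : ℕ} {α : F} (hα : α ^ (1 + e) = -1)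
    {c a : (Fin n → F) × (Fin n → F)} (hc : c ∈ smulGraph α) (ha : a ∈ smulGraph α) :
    gin e c a = 0 := by
  obtain ⟨c₁, c₂⟩ := c
  obtain ⟨a₁, a₂⟩ := a
  change c₂ = α • c₁ at hc
  change a₂ = α • a₁ at ha
  subst hc ha
  have hterm : ∀ i, α * c₁ i * (α * a₁ i) ^ e = -(c₁ i * a₁ i ^ e) := fun i => by
    linear_combination (c₁ i * a₁ i ^ e) * hα
  simp [gin, hterm]

theorem exists_ne_zero_of_eq_galoisDual [NeZero n] {e : ℕ} {S : Set ((Fin n → F) × (Fin n → F))}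
    (hS : S = galoisDual e S) : ∃ a ∈ S, a ≠ 0 := by
  by_contra! h
  have hone : (1 : (Fin n → F) × (Fin n → F)) ∈ S := by
    rw [hS]
    intro c hc
    simp [h c hc, gin]
  exact one_ne_zero (h 1 hone)

theorem exists_subset_smulGraph_of_pairing_eq_zero {e : ℕ}
    {S : Set ((Fin n → F) × (Fin n → F))} (hS : ∃ a ∈ S, a ≠ 0)
    (hpair : ∀ c ∈ S, ∀ a ∈ S, ∀ i i', c.1 i * a.1 i' ^ e + c.2 i * a.2 i' ^ e = 0) :
    ∃ α : F, α ^ (1 + e) = -1 ∧ S ⊆ smulGraph α := by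
  obtain ⟨a, ha, ha0⟩ := hS
  obtain ⟨i, hi⟩ : ∃ i, a.2 i ≠ 0 := by
    by_contra! h
    refine ha0 (Prod.ext (funext fun j => ?_) (funext h))
    have := hpair a ha a ha j j
    rw [h j, zero_mul, add_zero] at this
    exact eq_zero_of_pow_eq_zero (n := 1 + e) (by rw [pow_add, pow_one]; exact this)
  set α := -(a.1 i ^ e) / a.2 i ^ e
  have hgraph : S ⊆ smulGraph α := fun c hc => funext fun j => by
    have hpow : a.2 i ^ e ≠ 0 := pow_ne_zero e hi
    have := hpair c hc a ha j i
    simp only [Pi.smul_apply, smul_eq_mul, α]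
    field_simp
    linear_combination this
  refine ⟨α, ?_, hgraph⟩
  have ha2 : a.2 i = α * a.1 i := congrFun (hgraph ha) i
  have ha1 : a.1 i ≠ 0 := fun h0 => hi (by rw [ha2, h0, mul_zero])
  have hself := hpair a ha a ha i i
  rw [ha2] at hself
  have hfac : (α ^ (1 + e) + 1) * (a.1 i * a.1 i ^ e) = 0 := by
    linear_combination hself
  linear_combination (mul_eq_zero.mp hfac).resolve_right (mul_ne_zero ha1 (pow_ne_zero e ha1))

theorem galoisDual_smulGraph {e : ℕ} (hinj : Function.Injective fun x : F => x ^ e) {α : F}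
    (hα : α ^ (1 + e) = -1) : galoisDual e (smulGraph (n := n) α) = smulGraph α := by
  ext x
  refine ⟨fun hx => funext fun i => ?_, fun hx c hc => gin_eq_zero_of_mem_smulGraph hα hc hx⟩
  have hsingle : x.1 i ^ e + α * x.2 i ^ e = 0 := by
    simpa [gin, Pi.single_apply] using hx (Pi.single i 1, α • Pi.single i 1) rfl
  apply hinj
  simp only [Pi.smul_apply, smul_eq_mul, mul_pow]
  linear_combination (-α ^ e) * hsingle + x.2 i ^ e * hα

theorem IsConstacyclic.exists_eq_smulGraph [NeZero n] {lam : F} {e : ℕ}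
    {S : Set ((Fin n → F) × (Fin n → F))} (hlam : lam ^ (1 + e) ≠ 1)
    (hS : IsConstacyclic lam S) (hD : S = galoisDual e S) :
    ∃ α : F, α ^ (1 + e) = -1 ∧ S = smulGraph α := by
  have hiso : ∀ c ∈ S, ∀ a ∈ S, gin e c a = 0 := fun c hc a ha =>
    (Set.ext_iff.mp hD a).mp ha c hc
  obtain ⟨α, hα, hsub⟩ := exists_subset_smulGraph_of_pairing_eq_zero
    (exists_ne_zero_of_eq_galoisDual hD) fun c hc a ha => hS.pairing_eq_zero hlam hiso hc ha
  refine ⟨α, hα, hsub.antisymm fun x hx => ?_⟩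
  rw [hD]
  exact fun c hc => gin_eq_zero_of_mem_smulGraph hα (hsub hc) hx

end

theorem stmt_9_general {F : Type*} [Field F] [Fintype F] {p ℓ h n : ℕ} [NeZero n]
    (hp : p.Prime) (hcard : Fintype.card F = p ^ ℓ)
    (lam : F) (hlam1 : lam ^ (1 + p ^ h) ≠ 1)
    (C : Submodule F ((Fin n → F) × (Fin n → F))) :
    ((∀ c ∈ C, (cshift lam c.1, cshift lam c.2) ∈ C) ∧
      (C : Set ((Fin n → F) × (Fin n → F))) = {a | ∀ c ∈ C, gin (p ^ h) c a = 0}) ↔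
    ∃ α : F, α ≠ 0 ∧ α ^ (1 + p ^ h) = -1 ∧
      ∀ x, x ∈ C ↔ ∃ u : Fin n → F, x = (u, α • u) := by
  have := Fact.mk hp
  have := charP_of_card_eq_prime_pow hcard
  simp only [← mem_smulGraph_iff]
  constructor
  · rintro ⟨hT, hD⟩
    obtain ⟨α, hα, hC⟩ := IsConstacyclic.exists_eq_smulGraph hlam1 hT hD
    exact ⟨α, ne_zero_of_pow_one_add_eq_neg_one hα, hα, Set.ext_iff.mp hC⟩
  · rintro ⟨α, -, hα, hC⟩
    refine ⟨fun c hc => (hC _).2 (isConstacyclic_smulGraph lam α c ((hC c).1 hc)), ?_⟩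
    change (C : Set ((Fin n → F) × (Fin n → F))) = galoisDual (p ^ h) C
    rw [Set.ext hC, galoisDual_smulGraph (iterateFrobenius_inj F p h) hα]

theorem stmt_9 {F : Type*} [Field F] [Fintype F] {p ℓ h n : ℕ} [NeZero n]
    (hp : p.Prime) (hcard : Fintype.card F = p ^ ℓ) (hh : h < ℓ)
    (lam : F) (hlam : lam ≠ 0) (hlam1 : lam ^ (1 + p ^ h) ≠ 1)
    (C : Submodule F ((Fin n → F) × (Fin n → F))) :
    ((∀ c ∈ C, (cshift lam c.1, cshift lam c.2) ∈ C) ∧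
      (C : Set ((Fin n → F) × (Fin n → F))) = {a | ∀ c ∈ C, gin (p ^ h) c a = 0}) ↔
    ∃ α : F, α ≠ 0 ∧ α ^ (1 + p ^ h) = -1 ∧
      ∀ x, x ∈ C ↔ ∃ u : Fin n → F, x = (u, α • u) :=
  stmt_9_general hp hcard lam hlam1 C
end

section
/- Let F be a finite field of cardinality p^ℓ, 0 ≤ h < ℓ, λ ∈ F^× with λ^{1+p^h} ≠ 1. Every Galois p^h-self-dual 2-quasi λ-constacyclic code C of length 2n over F has minimum Hamming weight exactly 2; hence the family of such codes is asymptotically bad (the relative minimum distance 2/(2n) tends to 0 as n → ∞). -/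
/-- The Hamming weight of a word in `Fⁿ × Fⁿ`. -/
noncomputable def wt {F : Type*} [Field F] {n : ℕ} (x : (Fin n → F) × (Fin n → F)) : ℕ :=
  {i | x.1 i ≠ 0}.ncard + {i | x.2 i ≠ 0}.ncard

/-! Shifting both halves of `a, b ∈ Fⁿ × Fⁿ` changes their Galois pairing only by
`(λ^{1+e} - 1)` times the contribution of the last coordinate. Since `λ^{1+e} ≠ 1` and `C` is
self-orthogonal and shift-invariant, this contribution, and then by shifting the contribution of
every coordinate, vanishes on `C × C`. Taking `a = b` gives `a₁ⱼ^{1+e} + a₂ⱼ^{1+e} = 0`, so the two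
halves of a codeword have the same support and a nonzero codeword has weight at least `2`.
Conversely, by self-duality the restriction of a codeword to a single coordinate `j` is again
a codeword, of weight exactly `2` when it is nonzero. -/

open Fin.NatCast in
theorem Fin.forall_of_sub_one {n : ℕ} [NeZero n] {P : Fin n → Prop} {j₀ : Fin n} (h₀ : P j₀)
    (hstep : ∀ j, P j → P (j - 1)) (j : Fin n) : P j := by
  have hk : ∀ k : ℕ, P (j₀ - (k : Fin n)) := by
    intro k
    induction k with
    | zero => simpa using h₀
    | succ k ih => simpa [sub_sub] using hstep _ ih
  simpa using hk (j₀ - j).val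

theorem eq_zero_iff_of_mul_pow_add_mul_pow_eq_zero {R : Type*} [Semiring R] [NoZeroDivisors R]
    {e : ℕ} {x y : R} (h : x * x ^ e + y * y ^ e = 0) : x = 0 ↔ y = 0 := by
  rw [← pow_succ', ← pow_succ'] at h
  constructor <;> rintro rfl <;> simpa using h

section QuasiConstacyclic

variable {F : Type*} [Field F] {n : ℕ}

def ginAt (e : ℕ) (j : Fin n) (a b : (Fin n → F) × (Fin n → F)) : F :=
  a.1 j * b.1 j ^ e + a.2 j * b.2 j ^ e

def qshift [NeZero n] (lam : F) (c : (Fin n → F) × (Fin n → F)) : (Fin n → F) × (Fin n → F) :=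
  (cshift lam c.1, cshift lam c.2)

def restrictTo (j : Fin n) (c : (Fin n → F) × (Fin n → F)) : (Fin n → F) × (Fin n → F) :=
  (Pi.single j (c.1 j), Pi.single j (c.2 j))

theorem gin_eq_sum_ginAt (e : ℕ) (a b : (Fin n → F) × (Fin n → F)) :
    gin e a b = ∑ j, ginAt e j a b := by
  simp only [gin, ginAt, Finset.sum_add_distrib]

theorem ginAt_qshift [NeZero n] (e : ℕ) (lam : F) (j : Fin n) (a b : (Fin n → F) × (Fin n → F)) :
    ginAt e j (qshift lam a) (qshift lam b)
      = (if j = 0 then lam else 1) ^ (1 + e) * ginAt e (j - 1) a b := by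
  simp only [ginAt, qshift, cshift, mul_pow]
  ring

theorem gin_qshift [NeZero n] (e : ℕ) (lam : F) (a b : (Fin n → F) × (Fin n → F)) :
    gin e (qshift lam a) (qshift lam b)
      = gin e a b + (lam ^ (1 + e) - 1) * ginAt e (-1) a b := by
  have hterm : ∀ j : Fin n, (if j = 0 then lam else 1) ^ (1 + e) * ginAt e (j - 1) a b
      = ginAt e (j - 1) a b + if j = 0 then (lam ^ (1 + e) - 1) * ginAt e (-1) a b else 0 := by
    intro j
    split_ifs with hj
    · rw [hj, zero_sub]
      ring
    · simp
  simp only [gin_eq_sum_ginAt, ginAt_qshift, hterm, Finset.sum_add_distrib,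
    Finset.sum_ite_eq', Finset.mem_univ, if_true]
  congr 1
  exact Fintype.sum_equiv (Equiv.subRight 1) _ _ fun _ => rfl

theorem gin_restrictTo {e : ℕ} (he : e ≠ 0) (j : Fin n) (a b : (Fin n → F) × (Fin n → F)) :
    gin e a (restrictTo j b) = ginAt e j a b := by
  simp [gin, ginAt, restrictTo, Pi.single_apply, zero_pow he]

theorem ginAt_eq_zero_of_selfOrthogonal [NeZero n] {e : ℕ} {lam : F} (hlam : lam ≠ 0)
    (hlam1 : lam ^ (1 + e) ≠ 1) {C : Set ((Fin n → F) × (Fin n → F))}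
    (hcc : ∀ c ∈ C, qshift lam c ∈ C) (horth : ∀ c ∈ C, ∀ d ∈ C, gin e c d = 0) (j : Fin n) :
    ∀ c ∈ C, ∀ d ∈ C, ginAt e j c d = 0 := by
  refine Fin.forall_of_sub_one (P := fun j => ∀ c ∈ C, ∀ d ∈ C, ginAt e j c d = 0)
    (j₀ := -1) ?_ ?_ j
  · intro c hc d hd
    have h := gin_qshift e lam c d
    rw [horth _ (hcc c hc) _ (hcc d hd), horth c hc d hd, zero_add, eq_comm] at h
    exact (mul_eq_zero.mp h).resolve_left (sub_ne_zero.mpr hlam1)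
  · intro i hi c hc d hd
    have h := hi _ (hcc c hc) _ (hcc d hd)
    rw [ginAt_qshift] at h
    refine (mul_eq_zero.mp h).resolve_left (pow_ne_zero _ ?_)
    split_ifs
    exacts [hlam, one_ne_zero]

theorem exists_ne_zero_ne_zero_of_eq_zero_iff {x : (Fin n → F) × (Fin n → F)}
    (hsupp : ∀ j, x.1 j = 0 ↔ x.2 j = 0) (hx : x ≠ 0) : ∃ j, x.1 j ≠ 0 ∧ x.2 j ≠ 0 := by
  by_contra! h
  refine hx (Prod.ext (funext fun j => ?_) (funext fun j => ?_))
  · by_contra h1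
    exact h1 ((hsupp j).2 (h j h1))
  · by_cases h1 : x.1 j = 0
    exacts [(hsupp j).1 h1, h j h1]

theorem two_le_wt {x : (Fin n → F) × (Fin n → F)} (hsupp : ∀ j, x.1 j = 0 ↔ x.2 j = 0)
    (hx : x ≠ 0) : 2 ≤ wt x := by
  obtain ⟨j, h1, h2⟩ := exists_ne_zero_ne_zero_of_eq_zero_iff hsupp hx
  have c1 : 0 < {i | x.1 i ≠ 0}.ncard := (Set.ncard_pos (Set.toFinite _)).2 ⟨j, h1⟩
  have c2 : 0 < {i | x.2 i ≠ 0}.ncard := (Set.ncard_pos (Set.toFinite _)).2 ⟨j, h2⟩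
  unfold wt
  omega

theorem wt_restrictTo {j : Fin n} {c : (Fin n → F) × (Fin n → F)} (h1 : c.1 j ≠ 0)
    (h2 : c.2 j ≠ 0) : wt (restrictTo j c) = 2 := by
  have hs : ∀ x : F, x ≠ 0 → {i | (Pi.single j x : Fin n → F) i ≠ 0} = {j} := by
    intro x hx
    ext i
    by_cases hi : i = j <;> simp [hi, hx]
  simp only [wt, restrictTo, hs _ h1, hs _ h2, Set.ncard_singleton]

theorem exists_ne_zero_of_eq_orthogonal [NeZero n] (e : ℕ) {C : Set ((Fin n → F) × (Fin n → F))}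
    (hsd : C = {a | ∀ c ∈ C, gin e c a = 0}) : ∃ c ∈ C, c ≠ 0 := by
  by_contra! h
  have hw : ((Pi.single 0 1, 0) : (Fin n → F) × (Fin n → F)) ∈ C := by
    rw [hsd]
    intro c hc
    simp [h c hc, gin]
  simpa using congrFun (congrArg Prod.fst (h _ hw)) 0

end QuasiConstacyclic

theorem stmt_13_general {F : Type*} [Field F] {p h n : ℕ} [NeZero n]
    (hp : p.Prime)
    (lam : F) (hlam : lam ≠ 0) (hlam1 : lam ^ (1 + p ^ h) ≠ 1)
    (C : Submodule F ((Fin n → F) × (Fin n → F)))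
    (hcc : ∀ c ∈ C, (cshift lam c.1, cshift lam c.2) ∈ C)
    (hsd : (C : Set ((Fin n → F) × (Fin n → F))) = {a | ∀ c ∈ C, gin (p ^ h) c a = 0}) :
    (∃ x ∈ C, x ≠ 0 ∧ wt x = 2) ∧ ∀ x ∈ C, x ≠ 0 → 2 ≤ wt x := by
  have hmem : ∀ a, a ∈ C ↔ ∀ c ∈ C, gin (p ^ h) c a = 0 := fun a => Set.ext_iff.mp hsd a
  have hcoord := ginAt_eq_zero_of_selfOrthogonal hlam hlam1 hcc
    fun c hc d hd => (hmem d).1 hd c hc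
  have hsupp : ∀ c ∈ C, ∀ j, c.1 j = 0 ↔ c.2 j = 0 := fun c hc j =>
    eq_zero_iff_of_mul_pow_add_mul_pow_eq_zero (hcoord j c hc c hc)
  refine ⟨?_, fun x hx hx0 => two_le_wt (hsupp x hx) hx0⟩
  obtain ⟨d, hd, hd0⟩ := exists_ne_zero_of_eq_orthogonal _ hsd
  obtain ⟨j, h1, h2⟩ := exists_ne_zero_ne_zero_of_eq_zero_iff (hsupp d hd) hd0
  refine ⟨restrictTo j d, (hmem _).2 fun c hc => ?_, fun h0 => h1 ?_, wt_restrictTo h1 h2⟩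
  · rw [gin_restrictTo (pow_ne_zero _ hp.ne_zero)]
    exact hcoord j c hc d hd
  · simpa [restrictTo] using congrFun (congrArg Prod.fst h0) j

theorem stmt_13 {F : Type*} [Field F] [Fintype F] {p ℓ h n : ℕ} [NeZero n]
    (hp : p.Prime) (hcard : Fintype.card F = p ^ ℓ) (hh : h < ℓ)
    (lam : F) (hlam : lam ≠ 0) (hlam1 : lam ^ (1 + p ^ h) ≠ 1)
    (C : Submodule F ((Fin n → F) × (Fin n → F)))
    (hcc : ∀ c ∈ C, (cshift lam c.1, cshift lam c.2) ∈ C)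
    (hsd : (C : Set ((Fin n → F) × (Fin n → F))) = {a | ∀ c ∈ C, gin (p ^ h) c a = 0}) :
    (∃ x ∈ C, x ≠ 0 ∧ wt x = 2) ∧ ∀ x ∈ C, x ≠ 0 → 2 ≤ wt x :=
  stmt_13_general hp lam hlam hlam1 C hcc hsd
end

section
/- Let F be a finite field of cardinality p^ℓ, 0 ≤ h < ℓ, λ ∈ F^× with λ^{1+p^h} = 1, and R_λ = F[X]/⟨Xⁿ − λ⟩. For g ∈ R_λ, the R_λ-submodule C_{1,g} of R_λ² generated by (1, g) is Galois p^h-self-dual if and only if g·g* = −1, where * is the automorphism a(X) ↦ a^{(p^h)}(X^{nt−1}) mod (Xⁿ − λ) and t is the order of λ in F^×. -/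
open Polynomial

/-!
The map `a ↦ a*` is a ring endomorphism of `R_λ`: it sends `X` to `X^(nt-1) = X⁻¹`, and it is
compatible with `Xⁿ = λ` because `λ^(p^h) = λ⁻¹`. The Galois inner product of the coordinate
vectors of `u, v ∈ R_λ` is the constant coefficient of `u * v*`, since `Xⁱ (Xʲ)* = X^(i-j)` has
constant coefficient `δᵢⱼ` for `i, j < n`. This pairing is nondegenerate, so `(a₁, a₂)` is
orthogonal to `C_{1,g}` iff `a₁* + g a₂* = 0`. Applied to `(1, g)` this gives `g g* = -1`;
conversely, if `g g* = -1`, injectivity of `*` shows that the solutions are exactly `(u, u g)`.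
-/

theorem range_graph_eq_orthogonal_iff {R M : Type*} [CommRing R] [AddCommGroup M]
    (S : R →+* R) (hS : Function.Injective S) (φ : R →+ M)
    (hφ : ∀ w, (∀ u, φ (u * w) = 0) → w = 0) (g : R) :
    Set.range (fun u => (u, u * g)) =
        {a : R × R | ∀ c ∈ Set.range (fun u => (u, u * g)), φ (c.1 * S a.1 + c.2 * S a.2) = 0}
      ↔ g * S g = -1 := by
  have mem_orthogonal : ∀ a : R × R,
      (∀ c ∈ Set.range (fun u => (u, u * g)), φ (c.1 * S a.1 + c.2 * S a.2) = 0) ↔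
        S a.1 + g * S a.2 = 0 := by
    intro a
    simp only [Set.forall_mem_range, mul_assoc, ← mul_add]
    exact ⟨hφ _, fun h u => by rw [h, mul_zero, map_zero]⟩
  simp only [Set.ext_iff, Set.mem_ofPred_eq, mem_orthogonal]
  constructor
  · intro h
    have := (h (1, g)).mp ⟨1, by simp⟩
    rw [map_one] at this
    exact eq_neg_of_add_eq_zero_right this
  · intro hg a
    constructor
    · rintro ⟨u, rfl⟩
      show S u + g * S (u * g) = 0
      rw [map_mul]
      linear_combination S u * hg
    · intro ha
      refine ⟨a.1, Prod.ext rfl (hS ?_)⟩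
      have ha1 : S a.1 = -(g * S a.2) := eq_neg_of_add_eq_zero_left ha
      calc S (a.1 * g) = -(g * S g) * S a.2 := by rw [map_mul, ha1]; ring
        _ = S a.2 := by rw [hg, neg_neg, one_mul]

theorem pow_eq_pow_sub_one_of_pow_one_add_eq_one {M : Type*} [Monoid M] {x : M} {q N : ℕ}
    (hx : x ^ (1 + q) = 1) (hN : x ^ N = 1) (hN0 : 0 < N) : x ^ q = x ^ (N - 1) :=
  calc x ^ q = x ^ N * x ^ q := by rw [hN, one_mul]
    _ = x ^ (N - 1) * x ^ (1 + q) := by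
      rw [← pow_add, ← pow_add, ← add_assoc, Nat.sub_add_cancel hN0]
    _ = x ^ (N - 1) := by rw [hx, mul_one]

theorem Nat.add_sub_one_mul_self {N : ℕ} (hN : 0 < N) (i : ℕ) : i + (N - 1) * i = N * i := by
  have := Nat.le_mul_of_pos_left i hN
  rw [Nat.sub_one_mul]
  omega

theorem Nat.eq_of_dvd_add_mul_sub_one {n t i j : ℕ} (ht : 0 < t) (hi : i < n) (hj : j < n)
    (h : n ∣ i + (n * t - 1) * j) : i = j := by
  obtain ⟨s, hs⟩ : ∃ s, n * t = s + 1 :=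
    ⟨n * t - 1, by have := Nat.mul_pos (by omega : 0 < n) ht; omega⟩
  rw [hs, Nat.add_sub_cancel] at h
  have hs' : (n * t : ℤ) = s + 1 := by exact_mod_cast hs
  have h' : (n : ℤ) ∣ (i - j : ℤ) := by
    have key : ((i + s * j : ℕ) : ℤ) = (i - j : ℤ) + n * (t * j) := by
      push_cast
      linear_combination (-(j : ℤ)) * hs'
    rw [← dvd_add_left (dvd_mul_right (n : ℤ) (t * j)), ← key]
    exact_mod_cast h
  have := Int.eq_zero_of_abs_lt_dvd h' (by rw [abs_lt]; omega)
  omega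

namespace Rlam

variable {F : Type*} [Field F] {n : ℕ} {lam : F}

local notation "π" => Ideal.Quotient.mk (Ideal.span {(X : F[X]) ^ n - C lam})

theorem mk_X_pow_self : π X ^ n = π (C lam) := by
  rw [← map_pow, Ideal.Quotient.eq]
  exact Ideal.subset_span rfl

theorem smul_eq_mk_C_mul (c : F) (w : Rlam F n lam) : c • w = π (C c) * w :=
  (Algebra.smul_def c w).trans (by rw [← Ideal.Quotient.mk_algebraMap, algebraMap_eq])

theorem mk_X_pow_eq_smul (k : ℕ) : π X ^ k = lam ^ (k / n) • π X ^ (k % n) := by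
  rw [smul_eq_mk_C_mul, C_pow, map_pow, ← mk_X_pow_self, ← pow_mul, ← pow_add,
    Nat.div_add_mod]

-- With `fr = (·) ^ p ^ h` and `m = n * orderOf λ - 1`, so that `X ^ m = X⁻¹`, this is the
-- paper's automorphism `a ↦ a*`.
noncomputable def twist (fr : F →+* F) (m : ℕ) (hm : fr lam = lam ^ m) :
    Rlam F n lam →+* Rlam F n lam :=
  Ideal.Quotient.lift _ ((Ideal.Quotient.mk _).comp (eval₂RingHom (C.comp fr) (X ^ m))) <| by
    refine fun a ha => (RingHom.mem_ker).mp ((Ideal.span_singleton_le_iff_mem _).mpr ?_ ha)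
    rw [RingHom.mem_ker]
    simp only [RingHom.comp_apply, coe_eval₂RingHom, eval₂_X, eval₂_C, hm,
      map_sub, map_pow]
    rw [← pow_mul, mul_comm, pow_mul, mk_X_pow_self, sub_self]

theorem twist_mk_C (fr : F →+* F) (m : ℕ) (hm : fr lam = lam ^ m) (c : F) :
    twist fr m hm (π (C c)) = π (C (fr c)) := by
  simp [twist]

theorem twist_mk_X (fr : F →+* F) (m : ℕ) (hm : fr lam = lam ^ m) :
    twist fr m hm (π X) = π X ^ m := by
  simp [twist]

theorem twist_mk (fr : F →+* F) (m : ℕ) (hm : fr lam = lam ^ m) (f : F[X]) :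
    twist fr m hm (π f) = π (f.sum fun i a => C (fr a) * X ^ (m * i)) := by
  simp [twist, eval₂_eq_sum, pow_mul]

section Coordinates

variable (ι : (Fin n → F) ≃ₗ[F] Rlam F n lam)
  (hι : ∀ v : Fin n → F,
    ι v = Ideal.Quotient.mk _ (∑ i : Fin n, C (v i) * (X : F[X]) ^ (i : ℕ)))
include hι

theorem apply_eq_sum_smul (v : Fin n → F) : ι v = ∑ i, v i • π X ^ (i : ℕ) := by
  simp only [hι, map_sum, map_mul, map_pow, smul_eq_mk_C_mul]

theorem symm_smul_mk_X_pow (r : Fin n) (c : F) :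
    ι.symm (c • π X ^ (r : ℕ)) = Pi.single r c := by
  rw [LinearEquiv.symm_apply_eq, apply_eq_sum_smul ι hι,
    Fintype.sum_eq_single r fun b hb => by rw [Pi.single_eq_of_ne hb, zero_smul],
    Pi.single_eq_same]

theorem symm_mk_X_pow_apply_zero [NeZero n] (k : ℕ) :
    ι.symm (π X ^ k) 0 = if n ∣ k then lam ^ (k / n) else 0 := by
  have hk : k % n < n := Nat.mod_lt k (Nat.pos_of_neZero n)
  rw [mk_X_pow_eq_smul, show k % n = ((⟨k % n, hk⟩ : Fin n) : ℕ) from rfl,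
    symm_smul_mk_X_pow ι hι, Pi.single_apply]
  simp only [Fin.ext_iff, Fin.val_zero, eq_comm, Nat.dvd_iff_mod_eq_zero]

theorem symm_mk_X_pow_mul_apply_zero [NeZero n] (ht : 0 < orderOf lam) (i j : Fin n) :
    ι.symm (π X ^ (i : ℕ) * π X ^ ((n * orderOf lam - 1) * j)) 0 = if i = j then 1 else 0 := by
  rw [← pow_add, symm_mk_X_pow_apply_zero ι hι]
  by_cases hij : i = j
  · have hN : 0 < n * orderOf lam := Nat.mul_pos (Nat.pos_of_neZero n) ht
    rw [if_pos hij, ← hij, Nat.add_sub_one_mul_self hN, mul_assoc, if_pos (dvd_mul_right _ _),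
      Nat.mul_div_cancel_left _ (Nat.pos_of_neZero n), pow_mul, pow_orderOf_eq_one, one_pow]
  · have hndvd : ¬n ∣ i + (n * orderOf lam - 1) * j :=
      fun h => hij (Fin.ext (Nat.eq_of_dvd_add_mul_sub_one ht i.isLt j.isLt h))
    rw [if_neg hij, if_neg hndvd]

theorem symm_mul_mk_X_pow_apply_zero [NeZero n] (ht : 0 < orderOf lam) (u : Rlam F n lam)
    (j : Fin n) : ι.symm (u * π X ^ ((n * orderOf lam - 1) * j)) 0 = ι.symm u j := by
  conv_lhs => rw [← ι.apply_symm_apply u, apply_eq_sum_smul ι hι, Finset.sum_mul]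
  simp only [smul_mul_assoc, map_sum, map_smul, Finset.sum_apply, Pi.smul_apply, smul_eq_mul,
    symm_mk_X_pow_mul_apply_zero ι hι ht, mul_ite, mul_one, mul_zero, Finset.sum_ite_eq',
    Finset.mem_univ, if_true]

theorem eq_zero_of_forall_symm_mul_apply_zero [NeZero n] (ht : 0 < orderOf lam)
    (w : Rlam F n lam) (hw : ∀ u, ι.symm (u * w) 0 = 0) : w = 0 := by
  refine ι.symm.injective (funext fun j => ?_)
  rw [map_zero, Pi.zero_apply, ← symm_mul_mk_X_pow_apply_zero ι hι ht w j, mul_comm]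
  exact hw _

variable (fr : F →+* F) (hfr : fr lam = lam ^ (n * orderOf lam - 1))

theorem twist_apply_eq_sum_smul (v : Fin n → F) :
    twist fr _ hfr (ι v) = ∑ j, fr (v j) • π X ^ ((n * orderOf lam - 1) * j) := by
  simp only [apply_eq_sum_smul ι hι, map_sum, smul_eq_mk_C_mul, map_mul, map_pow, twist_mk_C,
    twist_mk_X, pow_mul]

theorem symm_mul_twist_apply_zero [NeZero n] (ht : 0 < orderOf lam) (u v : Rlam F n lam) :
    ι.symm (u * twist fr _ hfr v) 0 = ∑ j, ι.symm u j * fr (ι.symm v j) := by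
  conv_lhs => rw [← ι.apply_symm_apply v, twist_apply_eq_sum_smul ι hι, Finset.mul_sum]
  simp only [mul_smul_comm, map_sum, map_smul, Finset.sum_apply, Pi.smul_apply, smul_eq_mul,
    symm_mul_mk_X_pow_apply_zero ι hι ht]
  exact Finset.sum_congr rfl fun j _ => mul_comm _ _

theorem twist_injective [NeZero n] (ht : 0 < orderOf lam) :
    Function.Injective (twist (n := n) fr _ hfr) := by
  refine (injective_iff_map_eq_zero _).mpr fun v hv => ι.symm.injective (funext fun j => ?_)
  have := symm_mul_twist_apply_zero ι hι fr hfr ht (ι (Pi.single j 1)) v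
  rw [hv, mul_zero, map_zero, Pi.zero_apply, ι.symm_apply_apply,
    Fintype.sum_eq_single j fun b hb => by rw [Pi.single_eq_of_ne hb, zero_mul],
    Pi.single_eq_same, one_mul, eq_comm, map_eq_zero_iff fr fr.injective] at this
  rw [this, map_zero, Pi.zero_apply]

theorem gin_symm_symm [NeZero n] (ht : 0 < orderOf lam) (e : ℕ) (hfre : ∀ x, fr x = x ^ e)
    (c : Rlam F n lam × Rlam F n lam) (a : (Fin n → F) × (Fin n → F)) :
    gin e (ι.symm c.1, ι.symm c.2) a =
      ι.symm (c.1 * twist fr _ hfr (ι a.1) + c.2 * twist fr _ hfr (ι a.2)) 0 := by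
  rw [gin, map_add, Pi.add_apply, symm_mul_twist_apply_zero ι hι fr hfr ht,
    symm_mul_twist_apply_zero ι hι fr hfr ht, ι.symm_apply_apply, ι.symm_apply_apply]
  simp only [hfre]

end Coordinates

end Rlam

theorem stmt_14_general {F : Type*} [Field F] [Fintype F] {p ℓ h n : ℕ} [NeZero n]
    (hp : p.Prime) (hcard : Fintype.card F = p ^ ℓ)
    (lam : F) (hlam1 : lam ^ (1 + p ^ h) = 1)
    (ι : (Fin n → F) ≃ₗ[F] Rlam F n lam)
    (hι : ∀ v : Fin n → F,
      ι v = Ideal.Quotient.mk _ (∑ i : Fin n, C (v i) * (X : F[X]) ^ (i : ℕ)))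
    (σ : Rlam F n lam → Rlam F n lam)
    (hσ : ∀ f : F[X],
      σ (Ideal.Quotient.mk _ f) =
        Ideal.Quotient.mk _
          (f.sum fun i a => C (a ^ p ^ h) * X ^ ((n * orderOf lam - 1) * i)))
    (g : Rlam F n lam) :
    {x : (Fin n → F) × (Fin n → F) | ∃ u : Rlam F n lam, x = (ι.symm u, ι.symm (u * g))}
        = {a | ∀ c ∈ {x : (Fin n → F) × (Fin n → F) |
            ∃ u : Rlam F n lam, x = (ι.symm u, ι.symm (u * g))}, gin (p ^ h) c a = 0}
      ↔ g * σ g = -1 := by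
  have : Fact p.Prime := ⟨hp⟩
  have : CharP F p := charP_of_card_eq_prime_pow hcard
  have ht : 0 < orderOf lam :=
    (isOfFinOrder_iff_pow_eq_one.mpr ⟨1 + p ^ h, by positivity, hlam1⟩).orderOf_pos
  have hfr : iterateFrobenius F p h lam = lam ^ (n * orderOf lam - 1) := by
    refine pow_eq_pow_sub_one_of_pow_one_add_eq_one hlam1 ?_ (Nat.mul_pos (Nat.pos_of_neZero n) ht)
    rw [pow_mul', pow_orderOf_eq_one, one_pow]
  set S := Rlam.twist (n := n) (iterateFrobenius F p h) _ hfr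
  have hσg : σ g = S g := by
    obtain ⟨f, rfl⟩ := Ideal.Quotient.mk_surjective g
    simp only [hσ, S, Rlam.twist_mk, iterateFrobenius_def]
  let φ : Rlam F n lam →+ F := (LinearMap.proj 0 ∘ₗ ι.symm.toLinearMap).toAddMonoidHom
  have hcode : {x | ∃ u, x = (ι.symm u, ι.symm (u * g))} =
      Prod.map ι ι ⁻¹' Set.range (fun u => (u, u * g)) := by
    ext x
    simp only [Set.mem_preimage, Set.mem_ofPred_eq, Set.mem_range, Prod.map, Prod.ext_iff,
      LinearEquiv.eq_symm_apply]
    exact exists_congr fun u => and_congr eq_comm eq_comm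
  have horth : {a | ∀ c ∈ {x | ∃ u, x = (ι.symm u, ι.symm (u * g))}, gin (p ^ h) c a = 0} =
      Prod.map ι ι ⁻¹' {a | ∀ c ∈ Set.range (fun u => (u, u * g)),
        φ (c.1 * S a.1 + c.2 * S a.2) = 0} := by
    ext a
    simp only [Set.mem_preimage, Set.mem_ofPred_eq, Set.forall_mem_range, forall_exists_index]
    rw [forall_comm]
    refine forall_congr' fun u => ?_
    rw [forall_eq, Rlam.gin_symm_symm ι hι _ hfr ht _ (iterateFrobenius_def p h) (u, u * g)]
    rfl
  rw [horth, hcode, Set.preimage_eq_preimage (ι.surjective.prodMap ι.surjective),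
    range_graph_eq_orthogonal_iff S (Rlam.twist_injective ι hι _ hfr ht) φ
      (Rlam.eq_zero_of_forall_symm_mul_apply_zero ι hι ht) g, hσg]

theorem stmt_14 {F : Type*} [Field F] [Fintype F] {p ℓ h n : ℕ} [NeZero n]
    (hp : p.Prime) (hcard : Fintype.card F = p ^ ℓ) (hh : h < ℓ)
    (lam : F) (hlam : lam ≠ 0) (hlam1 : lam ^ (1 + p ^ h) = 1)
    (ι : (Fin n → F) ≃ₗ[F] Rlam F n lam)
    (hι : ∀ v : Fin n → F,
      ι v = Ideal.Quotient.mk _ (∑ i : Fin n, C (v i) * (X : F[X]) ^ (i : ℕ)))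
    (σ : Rlam F n lam → Rlam F n lam)
    (hσ : ∀ f : F[X],
      σ (Ideal.Quotient.mk _ f) =
        Ideal.Quotient.mk _
          (f.sum fun i a => C (a ^ p ^ h) * X ^ ((n * orderOf lam - 1) * i)))
    (g : Rlam F n lam) :
    {x : (Fin n → F) × (Fin n → F) | ∃ u : Rlam F n lam, x = (ι.symm u, ι.symm (u * g))}
        = {a | ∀ c ∈ {x : (Fin n → F) × (Fin n → F) |
            ∃ u : Rlam F n lam, x = (ι.symm u, ι.symm (u * g))}, gin (p ^ h) c a = 0}
      ↔ g * σ g = -1 :=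
  stmt_14_general hp hcard lam hlam1 ι hι σ hσ g
end

section
/- Let F be a finite field of cardinality p^ℓ with ℓ even, gcd(n, p) = 1, and R = F[X]/⟨Xⁿ − 1⟩ with the Hermitian involution * given by (Σaᵢxⁱ)* = Σaᵢ^{p^{ℓ/2}}x^{−i}. Suppose e is a primitive idempotent of R with e* ≠ e, and set ê = e + e*. Then for z = z' + z'' ∈ Re ⊕ Re* (z' ∈ Re, z'' ∈ Re*), one has z·z* = −ê if and only if z' is a unit of the field Re and z'' = −((z')*)^{−1}; consequently the number of z ∈ Rê with z·z* = −ê equals p^{dℓ} − 1 where d = dim_F Re. -/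
/-!
The map `σ` is a ring involution of `R = F[X]/⟨Xⁿ − 1⟩`, and `R` is finite and reduced because
`Xⁿ − 1` is separable. Since `e` is primitive and `σ e ≠ e`, the idempotent `e · σ e` must vanish,
so `Rê = Re ⊕ R(σ e)` with `σ` swapping the two summands. For `z = z' + z''` the product `z · σ z`
reduces to the cross terms `z' σ z'' ∈ Re` and `z'' σ z' ∈ R(σ e)`, and comparing components with
`-ê = -e - σ e` gives the equivalence. A reduced artinian ring is von Neumann regular (`x = x²y`),
which together with primitivity makes `Re` a field; so `z ↦ z e` is a bijection from the solutions
onto `Re \ {0}`, a set of `p^{dℓ} - 1` elements.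
-/

open Polynomial

set_option synthInstance.maxHeartbeats 1000000

section Idempotents

variable {R : Type*} [CommRing R] {e f x : R}

structure IsPrimitiveIdempotent (e : R) : Prop where
  isIdempotentElem : IsIdempotentElem e
  ne_zero : e ≠ 0
  eq_zero_or_eq_zero : ∀ e₁ e₂ : R, IsIdempotentElem e₁ → IsIdempotentElem e₂ →
    e₁ * e₂ = 0 → e = e₁ + e₂ → e₁ = 0 ∨ e₂ = 0

theorem IsIdempotentElem.mul_eq_self_of_mem_span_s16 (he : IsIdempotentElem e)
    (hx : x ∈ Ideal.span {e}) : x * e = x := by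
  obtain ⟨c, rfl⟩ := Ideal.mem_span_singleton'.mp hx
  rw [mul_assoc, he.eq]

theorem mul_eq_zero_of_mem_span_of_mem_span (hef : e * f = 0) {a b : R}
    (ha : a ∈ Ideal.span {e}) (hb : b ∈ Ideal.span {f}) : a * b = 0 := by
  obtain ⟨c, rfl⟩ := Ideal.mem_span_singleton'.mp ha
  obtain ⟨d, rfl⟩ := Ideal.mem_span_singleton'.mp hb
  linear_combination c * d * hef

theorem IsPrimitiveIdempotent.mul_eq_zero_or_eq (he : IsPrimitiveIdempotent e)
    (hf : IsIdempotentElem f) : e * f = 0 ∨ e * f = e := by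
  have he' := he.isIdempotentElem
  refine (he.eq_zero_or_eq_zero (e * f) (e * (1 - f)) (he'.mul hf) (he'.mul hf.one_sub) ?_
    (by ring)).imp id fun h => by linear_combination -h
  linear_combination e * e * hf.mul_one_sub_self

theorem exists_mul_self_mul_eq [IsArtinianRing R] [IsReduced R] (x : R) :
    ∃ y, x * x * y = x := by
  obtain ⟨n, y, hy⟩ := IsArtinian.exists_pow_succ_smul_dvd x (1 : R)
  refine ⟨y, ?_⟩
  have hnil : (x * (x * y - 1)) ^ (n + 1) = 0 := by
    simp only [smul_eq_mul, mul_one, pow_succ] at hy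
    rw [mul_pow, pow_succ, pow_succ]
    linear_combination x * (x * y - 1) ^ n * hy
  linear_combination IsReduced.eq_zero _ ⟨_, hnil⟩

theorem IsPrimitiveIdempotent.exists_mul_eq [IsArtinianRing R] [IsReduced R]
    (he : IsPrimitiveIdempotent e) (hx : x ∈ Ideal.span {e}) (hx0 : x ≠ 0) :
    ∃ w ∈ Ideal.span {e}, x * w = e := by
  obtain ⟨y, hy⟩ := exists_mul_self_mul_eq x
  have hxe : x * e = x := he.isIdempotentElem.mul_eq_self_of_mem_span_s16 hx
  have hidem : IsIdempotentElem (x * y) := by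
    unfold IsIdempotentElem; linear_combination y * hy
  refine ⟨y * e, Ideal.mul_mem_left _ _ (Ideal.mem_span_singleton_self e), ?_⟩
  rcases he.mul_eq_zero_or_eq hidem with h | h
  · exact absurd (by linear_combination x * h - x * y * hxe - hy) hx0
  · linear_combination h

theorem IsIdempotentElem.eq_of_mul_eq_of_mul_eq (he : IsIdempotentElem e) {w w' : R}
    (hw : w ∈ Ideal.span {e}) (hw' : w' ∈ Ideal.span {e}) (h : x * w = e) (h' : x * w' = e) :
    w = w' := by
  calc w = w * (x * w') := by rw [h', he.mul_eq_self_of_mem_span_s16 hw]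
    _ = w' * (x * w) := by ring
    _ = w' := by rw [h, he.mul_eq_self_of_mem_span_s16 hw']

theorem eq_and_eq_of_add_eq_add (he : IsIdempotentElem e) (hef : e * f = 0) {a a' b b' : R}
    (ha : a ∈ Ideal.span {e}) (ha' : a' ∈ Ideal.span {e})
    (hb : b ∈ Ideal.span {f}) (hb' : b' ∈ Ideal.span {f}) (h : a + b = a' + b') :
    a = a' ∧ b = b' := by
  have hbe : e * b = 0 :=
    mul_eq_zero_of_mem_span_of_mem_span hef (Ideal.mem_span_singleton_self e) hb
  have hbe' : e * b' = 0 :=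
    mul_eq_zero_of_mem_span_of_mem_span hef (Ideal.mem_span_singleton_self e) hb'
  have haa' : a = a' := by
    rw [← he.mul_eq_self_of_mem_span_s16 ha, ← he.mul_eq_self_of_mem_span_s16 ha']
    linear_combination e * h - hbe + hbe'
  exact ⟨haa', by linear_combination h - haa'⟩

theorem mul_add_mul_eq_self_of_mem_span (he : IsIdempotentElem e) (hf : IsIdempotentElem f)
    (hef : e * f = 0) (hx : x ∈ Ideal.span {e + f}) : x * e + x * f = x := by
  obtain ⟨c, rfl⟩ := Ideal.mem_span_singleton'.mp hx
  linear_combination c * he.eq + c * hf.eq + 2 * c * hef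

theorem mem_span_add_of_mem_span (he : IsIdempotentElem e) (hef : e * f = 0)
    (hx : x ∈ Ideal.span {e}) : x ∈ Ideal.span {e + f} := by
  have hxf : x * f = 0 :=
    mul_eq_zero_of_mem_span_of_mem_span hef hx (Ideal.mem_span_singleton_self f)
  refine Ideal.mem_span_singleton'.mpr ⟨x, ?_⟩
  linear_combination he.mul_eq_self_of_mem_span_s16 hx + hxf

end Idempotents

section Involution

variable {R : Type*} [CommRing R] {σ : R →+* R} {e : R}

theorem map_mem_span_singleton (σ : R →+* R) {x : R} (hx : x ∈ Ideal.span {e}) :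
    σ x ∈ Ideal.span {σ e} := by
  obtain ⟨c, rfl⟩ := Ideal.mem_span_singleton'.mp hx
  exact Ideal.mem_span_singleton'.mpr ⟨σ c, (map_mul σ c e).symm⟩

theorem IsPrimitiveIdempotent.mul_map_eq_zero (he : IsPrimitiveIdempotent e)
    (hσ : Function.Involutive σ) (hne : σ e ≠ e) : e * σ e = 0 := by
  refine (he.mul_eq_zero_or_eq (he.isIdempotentElem.map σ)).resolve_right fun h => hne ?_
  calc σ e = σ (e * σ e) := by rw [h]
    _ = e * σ e := by rw [map_mul, hσ e, mul_comm]
    _ = e := h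

theorem add_mul_map_add_eq_neg_iff (he : IsIdempotentElem e) (hσ : Function.Involutive σ)
    (hef : e * σ e = 0) {z' z'' : R} (hz' : z' ∈ Ideal.span {e})
    (hz'' : z'' ∈ Ideal.span {σ e}) :
    (z' + z'') * σ (z' + z'') = -(e + σ e) ↔
      (∃ w ∈ Ideal.span {e}, z' * w = e) ∧
      (∃ w ∈ Ideal.span {σ e}, σ z' * w = σ e ∧ z'' = -w) := by
  have hσz'' : σ z'' ∈ Ideal.span {e} := by
    simpa only [hσ e] using map_mem_span_singleton σ hz''
  have hcross : (z' + z'') * σ (z' + z'') = z' * σ z'' + z'' * σ z' := by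
    have h₁ : z' * σ z' = 0 :=
      mul_eq_zero_of_mem_span_of_mem_span hef hz' (map_mem_span_singleton σ hz')
    have h₂ : σ z'' * z'' = 0 := mul_eq_zero_of_mem_span_of_mem_span hef hσz'' hz''
    rw [map_add]
    linear_combination h₁ + h₂
  rw [hcross]
  constructor
  · intro h
    obtain ⟨h₁, h₂⟩ := eq_and_eq_of_add_eq_add he hef
      (Ideal.mul_mem_right _ _ hz') (neg_mem (Ideal.mem_span_singleton_self e))
      (Ideal.mul_mem_right _ _ hz'') (neg_mem (Ideal.mem_span_singleton_self (σ e)))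
      (by rw [h, neg_add])
    exact ⟨⟨-σ z'', neg_mem hσz'', by linear_combination -h₁⟩,
      ⟨-z'', neg_mem hz'', by linear_combination -h₂, (neg_neg z'').symm⟩⟩
  · rintro ⟨-, w, -, hw, rfl⟩
    have hw' : z' * σ w = e := by simpa only [map_mul, hσ _] using congrArg σ hw
    rw [map_neg]
    linear_combination -hw' - hw

theorem mul_map_eq_neg_iff_of_mem_span_add (he : IsIdempotentElem e)
    (hσ : Function.Involutive σ) (hef : e * σ e = 0) {z : R} (hz : z ∈ Ideal.span {e + σ e}) :
    z * σ z = -(e + σ e) ↔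
      (∃ w ∈ Ideal.span {e}, z * e * w = e) ∧
      (∃ w ∈ Ideal.span {σ e}, σ (z * e) * w = σ e ∧ z * σ e = -w) := by
  have h := add_mul_map_add_eq_neg_iff he hσ hef
    (Ideal.mul_mem_left _ _ (Ideal.mem_span_singleton_self e))
    (Ideal.mul_mem_left _ _ (Ideal.mem_span_singleton_self (σ e))) (z' := z * e) (z'' := z * σ e)
  rwa [mul_add_mul_eq_self_of_mem_span he (he.map σ) hef hz] at h

theorem IsPrimitiveIdempotent.image_mul_setOf_mul_map_eq_neg [IsArtinianRing R] [IsReduced R]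
    (he : IsPrimitiveIdempotent e) (hσ : Function.Involutive σ) (hne : σ e ≠ e) :
    (· * e) '' {z | z ∈ Ideal.span {e + σ e} ∧ z * σ z = -(e + σ e)} =
      (Ideal.span {e} : Set R) \ {0} := by
  have he' := he.isIdempotentElem
  have hef := he.mul_map_eq_zero hσ hne
  ext x
  constructor
  · rintro ⟨z, ⟨hz, hzz⟩, rfl⟩
    obtain ⟨⟨w, -, hw⟩, -⟩ := (mul_map_eq_neg_iff_of_mem_span_add he' hσ hef hz).mp hzz
    refine ⟨Ideal.mul_mem_left _ _ (Ideal.mem_span_singleton_self e), fun h0 => he.ne_zero ?_⟩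
    rw [← hw, show z * e = 0 from h0, zero_mul]
  · rintro ⟨hx, hx0⟩
    obtain ⟨w, hw, hxw⟩ := he.exists_mul_eq hx hx0
    have hσw : σ w ∈ Ideal.span {σ e} := map_mem_span_singleton σ hw
    refine ⟨x + -σ w, ⟨?_, ?_⟩, ?_⟩
    · refine Ideal.add_mem _ (mem_span_add_of_mem_span he' hef hx) (neg_mem ?_)
      rw [add_comm]
      exact mem_span_add_of_mem_span (he'.map σ) (by rwa [mul_comm]) hσw
    · exact (add_mul_map_add_eq_neg_iff he' hσ hef hx (neg_mem hσw)).mpr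
        ⟨⟨w, hw, hxw⟩, σ w, hσw, by rw [← map_mul, hxw], rfl⟩
    · have hσwe : e * σ w = 0 :=
        mul_eq_zero_of_mem_span_of_mem_span hef (Ideal.mem_span_singleton_self e) hσw
      linear_combination he'.mul_eq_self_of_mem_span_s16 hx - hσwe

theorem IsPrimitiveIdempotent.injOn_mul_setOf_mul_map_eq_neg (he : IsPrimitiveIdempotent e)
    (hσ : Function.Involutive σ) (hne : σ e ≠ e) :
    Set.InjOn (· * e) {z | z ∈ Ideal.span {e + σ e} ∧ z * σ z = -(e + σ e)} := by
  have he' := he.isIdempotentElem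
  have hef := he.mul_map_eq_zero hσ hne
  have hsnd : ∀ z ∈ Ideal.span {e + σ e}, z * σ z = -(e + σ e) →
      σ (z * e) * -(z * σ e) = σ e := fun z hz hzz => by
    obtain ⟨-, w, -, hw, hzw⟩ := (mul_map_eq_neg_iff_of_mem_span_add he' hσ hef hz).mp hzz
    rwa [hzw, neg_neg]
  have hmem : ∀ z, -(z * σ e) ∈ Ideal.span {σ e} := fun z =>
    neg_mem (Ideal.mul_mem_left _ _ (Ideal.mem_span_singleton_self _))
  rintro z₁ ⟨hz₁, hzz₁⟩ z₂ ⟨hz₂, hzz₂⟩ (h : z₁ * e = z₂ * e)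
  have h₂ := hsnd z₂ hz₂ hzz₂
  rw [← h] at h₂
  have hσe_eq := (he'.map σ).eq_of_mul_eq_of_mul_eq (hmem z₁) (hmem z₂) (hsnd z₁ hz₁ hzz₁) h₂
  rw [← mul_add_mul_eq_self_of_mem_span he' (he'.map σ) hef hz₁,
    ← mul_add_mul_eq_self_of_mem_span he' (he'.map σ) hef hz₂, h, neg_inj.mp hσe_eq]

theorem IsPrimitiveIdempotent.ncard_setOf_mul_map_eq_neg [IsArtinianRing R] [IsReduced R]
    (he : IsPrimitiveIdempotent e) (hσ : Function.Involutive σ) (hne : σ e ≠ e) :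
    {z | z ∈ Ideal.span {e + σ e} ∧ z * σ z = -(e + σ e)}.ncard =
      (Ideal.span {e} : Set R).ncard - 1 := by
  rw [← Set.ncard_sdiff_singleton_of_mem (Ideal.zero_mem _),
    ← he.image_mul_setOf_mul_map_eq_neg hσ hne,
    (he.injOn_mul_setOf_mul_map_eq_neg hσ hne).ncard_image]

end Involution

theorem pow_pred_mul_pred_eq_self_s16 {M : Type*} [CommMonoid M] {u : M} {n : ℕ} (hn : n ≠ 0)
    (hu : u ^ n = 1) : u ^ ((n - 1) * (n - 1)) = u := by
  obtain ⟨m, rfl⟩ := Nat.exists_eq_succ_of_ne_zero hn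
  calc u ^ ((m + 1 - 1) * (m + 1 - 1)) = u ^ (m * m) * (u ^ (m + 1)) ^ 2 := by
        rw [hu, one_pow, mul_one, Nat.add_sub_cancel]
    _ = (u ^ (m + 1)) ^ (m + 1) * u := by
        rw [← pow_mul, ← pow_mul, ← pow_add, ← pow_succ]
        ring_nf
    _ = u := by rw [hu, one_pow, one_mul]

section Conjugation

variable {F : Type*} [Field F]

theorem Rlam.mk_X_pow (n : ℕ) : (Ideal.Quotient.mk _ X : Rlam F n 1) ^ n = 1 := by
  rw [← map_pow, ← map_one (Ideal.Quotient.mk _), Ideal.Quotient.eq, ← C_1]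
  exact Ideal.mem_span_singleton_self _

variable (F) (p k n : ℕ) [ExpChar F p]

-- `(∑ aᵢ xⁱ)* = ∑ aᵢ^{p^k} x^{-i}`, where `x⁻¹ = x^{n-1}` in `Rlam F n 1`.
noncomputable def hermitianConj : Rlam F n 1 →+* Rlam F n 1 :=
  Ideal.Quotient.lift _
    (eval₂RingHom ((Ideal.Quotient.mk _).comp (C.comp (iterateFrobenius F p k)))
      (Ideal.Quotient.mk _ X ^ (n - 1)))
    fun f hf => by
      obtain ⟨c, rfl⟩ := Ideal.mem_span_singleton'.mp hf
      simp only [map_mul, map_sub, map_pow, map_one, coe_eval₂RingHom, eval₂_X]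
      rw [← pow_mul, mul_comm (n - 1) n, pow_mul, Rlam.mk_X_pow, one_pow, sub_self, mul_zero]

variable {F p k n}

theorem hermitianConj_mk (f : F[X]) :
    hermitianConj F p k n (Ideal.Quotient.mk _ f) =
      Ideal.Quotient.mk _ (f.sum fun i a => C (a ^ p ^ k) * X ^ ((n - 1) * i)) := by
  rw [hermitianConj, Ideal.Quotient.lift_mk, coe_eval₂RingHom, eval₂_eq_sum, Polynomial.sum_def,
    Polynomial.sum_def, map_sum]
  refine Finset.sum_congr rfl fun i _ => ?_
  simp [iterateFrobenius_def, pow_mul]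

theorem hermitianConj_involutive [Fintype F] (hn : n ≠ 0) (hF : Fintype.card F = p ^ (2 * k)) :
    Function.Involutive (hermitianConj F p k n) := by
  suffices h : (hermitianConj F p k n).comp (hermitianConj F p k n) = RingHom.id _ from
    fun x => RingHom.congr_fun h x
  refine Ideal.Quotient.ringHom_ext (Polynomial.ringHom_ext (fun a => ?_) ?_)
  · have ha : (a ^ p ^ k) ^ p ^ k = a := by
      rw [← pow_mul, ← pow_add, ← two_mul, ← hF, FiniteField.pow_card]
    simp only [hermitianConj, RingHom.comp_apply, Ideal.Quotient.lift_mk, coe_eval₂RingHom,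
      eval₂_C, iterateFrobenius_def, ha, RingHom.id_apply]
  · simp [hermitianConj, ← pow_mul, pow_pred_mul_pred_eq_self_s16 hn (Rlam.mk_X_pow n)]

end Conjugation

theorem Rlam.finite {F : Type*} [Field F] {n : ℕ} (hn : n ≠ 0) : Module.Finite F (Rlam F n 1) :=
  (monic_X_pow_sub_C 1 hn).finite_quotient

theorem Rlam.isReduced {F : Type*} [Field F] {n : ℕ} (hn : (n : F) ≠ 0) :
    IsReduced (Rlam F n 1) :=
  (Ideal.isRadical_iff_quotient_reduced _).mp
    (isRadical_iff_span_singleton.mp (separable_X_pow_sub_C 1 hn one_ne_zero).squarefree.isRadical)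

theorem stmt_16_general {F : Type*} [Field F] [Fintype F] {p ℓ n : ℕ}
    (hp : p.Prime) (hl : Even ℓ) (hcard : Fintype.card F = p ^ ℓ)
    (hn : Nat.gcd n p = 1)
    (σ : Rlam F n 1 → Rlam F n 1)
    (hσ : ∀ f : F[X],
      σ (Ideal.Quotient.mk _ f) =
        Ideal.Quotient.mk _
          (f.sum fun i a => C (a ^ p ^ (ℓ / 2)) * X ^ ((n - 1) * i)))
    (e : Rlam F n 1) (he : e * e = e)
    (hprim : ∀ e₁ e₂ : Rlam F n 1, e₁ * e₁ = e₁ → e₂ * e₂ = e₂ → e₁ * e₂ = 0 →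
      e = e₁ + e₂ → e₁ = 0 ∨ e₂ = 0)
    (hne : σ e ≠ e) :
    (∀ z' ∈ Ideal.span {e}, ∀ z'' ∈ Ideal.span {σ e},
      ((z' + z'') * σ (z' + z'') = -(e + σ e) ↔
        (∃ w ∈ Ideal.span {e}, z' * w = e) ∧
        (∃ w ∈ Ideal.span {σ e}, σ z' * w = σ e ∧ z'' = -w))) ∧
    {z : Rlam F n 1 | z ∈ Ideal.span {e + σ e} ∧ z * σ z = -(e + σ e)}.ncard =
      p ^ (Module.finrank F
        (Submodule.restrictScalars F (Ideal.span {e} : Ideal (Rlam F n 1))) * ℓ) - 1 := by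
  have : Fact p.Prime := ⟨hp⟩
  have : CharP F p := charP_of_card_eq_prime_pow hcard
  have hn0 : n ≠ 0 := by
    rintro rfl
    exact hp.one_lt.ne' (by simpa using hn)
  have hnF : (n : F) ≠ 0 := by
    rw [Ne, CharP.cast_eq_zero_iff F p]
    exact (Nat.Prime.coprime_iff_not_dvd hp).mp (Nat.coprime_comm.mp hn)
  obtain ⟨k, rfl⟩ := hl
  obtain rfl : σ = hermitianConj F p k n := funext fun x => by
    obtain ⟨f, rfl⟩ := Ideal.Quotient.mk_surjective x
    rw [hσ, hermitianConj_mk, show (k + k) / 2 = k by omega]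
  have hinv := hermitianConj_involutive hn0 (by rw [hcard, two_mul])
  have he' : IsPrimitiveIdempotent e := ⟨he, fun h => hne (by rw [h, map_zero]), hprim⟩
  have := Rlam.finite (F := F) hn0
  have := IsArtinianRing.of_finite F (Rlam F n 1)
  have := Rlam.isReduced hnF
  refine ⟨fun z' hz' z'' hz'' =>
    add_mul_map_add_eq_neg_iff he hinv (he'.mul_map_eq_zero hinv hne) hz' hz'', ?_⟩
  rw [he'.ncard_setOf_mul_map_eq_neg hinv hne, ← Nat.card_coe_set_eq]
  change Nat.card (Submodule.restrictScalars F (Ideal.span {e})) - 1 = _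
  rw [Module.natCard_eq_pow_finrank (K := F), Nat.card_eq_fintype_card, hcard, ← pow_mul,
    mul_comm (k + k)]

theorem stmt_16 {F : Type*} [Field F] [Fintype F] {p ℓ n : ℕ}
    (hp : p.Prime) (hl : Even ℓ) (hcard : Fintype.card F = p ^ ℓ)
    (hn : Nat.gcd n p = 1)
    (σ : Rlam F n 1 → Rlam F n 1)
    (hσ : ∀ f : F[X],
      σ (Ideal.Quotient.mk _ f) =
        Ideal.Quotient.mk _
          (f.sum fun i a => C (a ^ p ^ (ℓ / 2)) * X ^ ((n - 1) * i)))
    (e : Rlam F n 1) (he : e * e = e) (he0 : e ≠ 0)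
    (hprim : ∀ e₁ e₂ : Rlam F n 1, e₁ * e₁ = e₁ → e₂ * e₂ = e₂ → e₁ * e₂ = 0 →
      e = e₁ + e₂ → e₁ = 0 ∨ e₂ = 0)
    (hne : σ e ≠ e) :
    (∀ z' ∈ Ideal.span {e}, ∀ z'' ∈ Ideal.span {σ e},
      ((z' + z'') * σ (z' + z'') = -(e + σ e) ↔
        (∃ w ∈ Ideal.span {e}, z' * w = e) ∧
        (∃ w ∈ Ideal.span {σ e}, σ z' * w = σ e ∧ z'' = -w))) ∧
    {z : Rlam F n 1 | z ∈ Ideal.span {e + σ e} ∧ z * σ z = -(e + σ e)}.ncard =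
      p ^ (Module.finrank F
        (Submodule.restrictScalars F (Ideal.span {e} : Ideal (Rlam F n 1))) * ℓ) - 1 :=
  stmt_16_general hp hl hcard hn σ hσ e he hprim hne
end

section
/- Let F be a finite field of cardinality q = p^ℓ, 0 ≤ h < ℓ, λ ∈ F^× with λ^{1+p^h} = 1, t the order of λ in F^×, and gcd(n, t) = 1. Then there exists γ ∈ F^× (a power of λ) with γⁿ = λ^{−1} and γ^{1+p^h} = 1, such that the map η : F[X]/⟨Xⁿ−1⟩ → F[X]/⟨Xⁿ−λ⟩ sending Σaᵢ Xⁱ to Σaᵢγⁱ Xⁱ (mod Xⁿ−λ) is an F-algebra isomorphism that preserves Hamming weight and preserves the Galois p^h-inner product: ⟨η(a), η(b)⟩_h = ⟨a, b⟩_h for all a, b. -/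
open Polynomial

/-- The Galois inner product `⟨a,b⟩ = ∑ aᵢ bᵢ^e` on `Fⁿ`, where `e = p^h`. -/
def gin1 {F : Type*} [Field F] {n : ℕ} (e : ℕ) (a b : Fin n → F) : F :=
  ∑ i, a i * b i ^ e

/-- The Hamming weight of a word in `Fⁿ`. -/
noncomputable def wt1 {F : Type*} [Field F] {n : ℕ} (v : Fin n → F) : ℕ :=
  {i | v i ≠ 0}.ncard

/-
Since `gcd(n, ord λ) = 1`, `n` is invertible modulo `ord λ`, so some power `γ = λ^s` satisfies
`γⁿ λ = 1`, and `γ` inherits `γ^(1+p^h) = 1` from `λ`. The substitution `X ↦ γX` sends `Xⁿ − 1`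
to the unit multiple `γⁿ (Xⁿ − λ)` of `Xⁿ − λ`, hence induces an algebra isomorphism of the
quotients; on coefficient vectors it multiplies the `i`-th coordinate by `γⁱ ≠ 0`, and
`γⁱ (γⁱ)^(p^h) = 1` makes the Galois inner product invariant.
-/

theorem exists_pow_pow_mul_eq_one {M : Type*} [Monoid M] {x : M} (hx : IsOfFinOrder x)
    {n : ℕ} (hn : n.Coprime (orderOf x)) : ∃ s : ℕ, (x ^ s) ^ n * x = 1 := by
  have : NeZero (orderOf x) := ⟨hx.orderOf_pos.ne'⟩
  refine ⟨(-(n : ZMod (orderOf x))⁻¹).val, ?_⟩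
  rw [← pow_mul, ← pow_succ, ← orderOf_dvd_iff_pow_eq_one, ← ZMod.natCast_eq_zero_iff]
  push_cast
  rw [ZMod.natCast_zmod_val, neg_mul, mul_comm, ZMod.coe_mul_inv_eq_one _ hn, neg_add_cancel]

namespace Polynomial

variable {F : Type*} [Field F]

noncomputable def algEquivCMulX {γ : F} (hγ : γ ≠ 0) : F[X] ≃ₐ[F] F[X] :=
  algEquivOfCompEqX (C γ * X) (C γ⁻¹ * X)
    (by simp [← mul_assoc, ← C_mul, hγ]) (by simp [← mul_assoc, ← C_mul, hγ])

theorem algEquivCMulX_apply {γ : F} (hγ : γ ≠ 0) (q : F[X]) :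
    algEquivCMulX hγ q = aeval (C γ * X) q :=
  rfl

theorem algEquivCMulX_sum_C_mul_X_pow {γ : F} (hγ : γ ≠ 0) {n : ℕ} (v : Fin n → F) :
    algEquivCMulX hγ (∑ i : Fin n, C (v i) * X ^ (i : ℕ)) =
      ∑ i : Fin n, C (γ ^ (i : ℕ) * v i) * X ^ (i : ℕ) := by
  rw [algEquivCMulX_apply, map_sum]
  refine Finset.sum_congr rfl fun i _ => ?_
  simp only [map_mul, aeval_C, map_pow, aeval_X, algebraMap_eq, mul_pow]
  ring

theorem map_algEquivCMulX_span_X_pow_sub_C {γ : F} (hγ : γ ≠ 0) {n : ℕ} {μ ν : F}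
    (h : γ ^ n * ν = μ) :
    (Ideal.span {(X : F[X]) ^ n - C μ}).map (algEquivCMulX hγ : F[X] →+* F[X]) =
      Ideal.span {X ^ n - C ν} := by
  rw [Ideal.map_span, Set.image_singleton, ← Ideal.span_singleton_mul_left_unit
    (isUnit_C.2 (hγ.isUnit.pow n)) (X ^ n - C ν)]
  congr 2
  change aeval (C γ * X) (X ^ n - C μ) = _
  rw [map_sub, aeval_C, algebraMap_eq, map_pow, aeval_X, ← h, mul_pow, C_mul, C_pow]
  ring

end Polynomial

namespace Rlam

variable {F : Type*} [Field F]

noncomputable def scaleEquiv (n : ℕ) {μ ν γ : F} (hγ : γ ≠ 0) (h : γ ^ n * ν = μ) :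
    Rlam F n μ ≃ₐ[F] Rlam F n ν :=
  Ideal.quotientEquivAlg _ _ (algEquivCMulX hγ) (map_algEquivCMulX_span_X_pow_sub_C hγ h).symm

theorem scaleEquiv_mk (n : ℕ) {μ ν γ : F} (hγ : γ ≠ 0) (h : γ ^ n * ν = μ) (q : F[X]) :
    scaleEquiv n hγ h (Ideal.Quotient.mk _ q) = Ideal.Quotient.mk _ (algEquivCMulX hγ q) :=
  rfl

end Rlam

section Words

variable {F : Type*} [Field F] {n : ℕ}

theorem wt1_mul_of_ne_zero {c : Fin n → F} (hc : ∀ i, c i ≠ 0) (v : Fin n → F) :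
    wt1 (fun i => c i * v i) = wt1 v := by
  simp only [wt1, ne_eq, mul_eq_zero, hc, false_or]

theorem gin1_mul_of_mul_pow_eq_one {e : ℕ} {c : Fin n → F} (hc : ∀ i, c i * c i ^ e = 1)
    (v w : Fin n → F) :
    gin1 e (fun i => c i * v i) (fun i => c i * w i) = gin1 e v w := by
  refine Finset.sum_congr rfl fun i _ => ?_
  calc c i * v i * (c i * w i) ^ e = (c i * c i ^ e) * (v i * w i ^ e) := by ring
    _ = v i * w i ^ e := by rw [hc, one_mul]

end Words

theorem stmt_17_general {F : Type*} [Field F] {p h n : ℕ}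
    (lam : F) (hlam1 : lam ^ (1 + p ^ h) = 1)
    (hn : Nat.gcd n (orderOf lam) = 1)
    (ι₁ : (Fin n → F) ≃ₗ[F] Rlam F n 1)
    (hι₁ : ∀ v : Fin n → F,
      ι₁ v = Ideal.Quotient.mk _ (∑ i : Fin n, C (v i) * (X : F[X]) ^ (i : ℕ)))
    (ι₂ : (Fin n → F) ≃ₗ[F] Rlam F n lam)
    (hι₂ : ∀ v : Fin n → F,
      ι₂ v = Ideal.Quotient.mk _ (∑ i : Fin n, C (v i) * (X : F[X]) ^ (i : ℕ))) :
    ∃ γ : F, (∃ s : ℕ, γ = lam ^ s) ∧ γ ^ n = lam⁻¹ ∧ γ ^ (1 + p ^ h) = 1 ∧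
      ∃ η : Rlam F n 1 ≃ₐ[F] Rlam F n lam,
        (∀ v : Fin n → F, η (ι₁ v) = ι₂ fun i => γ ^ (i : ℕ) * v i) ∧
        (∀ a : Rlam F n 1, wt1 (ι₂.symm (η a)) = wt1 (ι₁.symm a)) ∧
        (∀ a b : Rlam F n 1,
          gin1 (p ^ h) (ι₂.symm (η a)) (ι₂.symm (η b)) =
            gin1 (p ^ h) (ι₁.symm a) (ι₁.symm b)) := by
  obtain ⟨s, hs⟩ := exists_pow_pow_mul_eq_one
    (isOfFinOrder_iff_pow_eq_one.2 ⟨_, by positivity, hlam1⟩) hn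
  set γ := lam ^ s
  have hγ : γ ≠ 0 := pow_ne_zero _ (right_ne_zero_of_mul_eq_one hs)
  have hγ_pow : γ ^ (1 + p ^ h) = 1 := by rw [← pow_mul, mul_comm, pow_mul, hlam1, one_pow]
  set η := Rlam.scaleEquiv n hγ hs
  have hη : ∀ v, η (ι₁ v) = ι₂ fun i => γ ^ (i : ℕ) * v i := fun v => by
    rw [hι₁, hι₂, Rlam.scaleEquiv_mk, algEquivCMulX_sum_C_mul_X_pow]
  have hcoord : ∀ a, ι₂.symm (η a) = fun i : Fin n => γ ^ (i : ℕ) * ι₁.symm a i := fun a =>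
    ι₂.symm_apply_eq.2 (by rw [← hη, ι₁.apply_symm_apply])
  refine ⟨γ, ⟨s, rfl⟩, eq_inv_of_mul_eq_one_left hs, hγ_pow, η, hη, fun a => ?_, fun a b => ?_⟩
  · rw [hcoord]
    exact wt1_mul_of_ne_zero (fun i => pow_ne_zero _ hγ) _
  · rw [hcoord, hcoord]
    refine gin1_mul_of_mul_pow_eq_one (fun i => ?_) _ _
    rw [← pow_succ', ← pow_mul, mul_comm, pow_mul, add_comm, hγ_pow, one_pow]

theorem stmt_17 {F : Type*} [Field F] [Fintype F] {p ℓ h n : ℕ} [NeZero n]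
    (hp : p.Prime) (hcard : Fintype.card F = p ^ ℓ) (hh : h < ℓ)
    (lam : F) (hlam : lam ≠ 0) (hlam1 : lam ^ (1 + p ^ h) = 1)
    (hn : Nat.gcd n (orderOf lam) = 1)
    (ι₁ : (Fin n → F) ≃ₗ[F] Rlam F n 1)
    (hι₁ : ∀ v : Fin n → F,
      ι₁ v = Ideal.Quotient.mk _ (∑ i : Fin n, C (v i) * (X : F[X]) ^ (i : ℕ)))
    (ι₂ : (Fin n → F) ≃ₗ[F] Rlam F n lam)
    (hι₂ : ∀ v : Fin n → F,
      ι₂ v = Ideal.Quotient.mk _ (∑ i : Fin n, C (v i) * (X : F[X]) ^ (i : ℕ))) :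
    ∃ γ : F, (∃ s : ℕ, γ = lam ^ s) ∧ γ ^ n = lam⁻¹ ∧ γ ^ (1 + p ^ h) = 1 ∧
      ∃ η : Rlam F n 1 ≃ₐ[F] Rlam F n lam,
        (∀ v : Fin n → F, η (ι₁ v) = ι₂ fun i => γ ^ (i : ℕ) * v i) ∧
        (∀ a : Rlam F n 1, wt1 (ι₂.symm (η a)) = wt1 (ι₁.symm a)) ∧
        (∀ a b : Rlam F n 1,
          gin1 (p ^ h) (ι₂.symm (η a)) (ι₂.symm (η b)) =
            gin1 (p ^ h) (ι₁.symm a) (ι₁.symm b)) :=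
  stmt_17_general lam hlam1 hn ι₁ hι₁ ι₂ hι₂
end

section
/- Let p be a prime and k₁, …, k_v positive integers with kᵢ ≥ log_p(v) for all i. Then (p^{k₁} − 1)⋯(p^{k_v} − 1) ≥ p^{k₁+⋯+k_v − 2} and (p^{k₁} + 1)⋯(p^{k_v} + 1) ≤ p^{k₁+⋯+k_v + 2}. -/
lemma pow_succ_aux (a : ℕ) : ∀ n : ℕ, a^(n+1) + (n+1)*a^n ≤ (a+1)^(n+1) := by
  intro n
  induction n with
  | zero => simp [pow_succ]
  | succ n ih =>
    have h1 : (a^(n+1) + (n+1)*a^n) * (a+1)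
        = a^(n+2) + (n+2)*a^(n+1) + (n+1)*a^n := by ring
    calc a^(n+2) + (n+2)*a^(n+1)
        ≤ (a^(n+1) + (n+1)*a^n) * (a+1) := by omega
      _ ≤ (a+1)^(n+1) * (a+1) := Nat.mul_le_mul_right _ ih
      _ = (a+1)^(n+2) := by ring

lemma aux_nat : ∀ w : ℕ, (w+2)^(w+2) ≤ 4*(w+1)^(w+2) := by
  intro w
  induction w with
  | zero => norm_num
  | succ w ih =>
    set a : ℕ := (w+1)*(w+3) with ha
    have hB := pow_succ_aux a (w+1)
    have ha1 : a + 1 = (w+2)^2 := by ring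
    have hsq : a ≤ (w+2)^2 := by nlinarith
    have h2 : (w+3) * a^(w+2) ≤ (w+2) * (a+1)^(w+2) := by
      have h3 : (w+3) * a^(w+2) ≤ (w+2)*a^(w+2) + (w+2)^2 * a^(w+1) := by
        have : a * a^(w+1) = a^(w+2) := by ring
        nlinarith [Nat.zero_le (a^(w+1)), Nat.mul_le_mul_right (a^(w+1)) hsq]
      calc (w+3) * a^(w+2) ≤ (w+2)*a^(w+2) + (w+2)^2 * a^(w+1) := h3
        _ = (w+2) * (a^(w+2) + (w+2)*a^(w+1)) := by ring
        _ ≤ (w+2) * (a+1)^(w+2) := Nat.mul_le_mul_left _ hB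
    have key : (w+3)^(w+3) * (w+1)^(w+2) ≤ 4*(w+2)^(w+3) * (w+1)^(w+2) := by
      calc (w+3)^(w+3) * (w+1)^(w+2) = (w+3) * a^(w+2) := by rw [ha, mul_pow]; ring
        _ ≤ (w+2) * (a+1)^(w+2) := h2
        _ = (w+2)^(w+3) * (w+2)^(w+2) := by
            rw [ha1, ← pow_mul, ← pow_add, ← pow_succ']; congr 1; omega
        _ ≤ (w+2)^(w+3) * (4*(w+1)^(w+2)) := Nat.mul_le_mul_left _ ih
        _ = 4*(w+2)^(w+3) * (w+1)^(w+2) := by ring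
    exact Nat.le_of_mul_le_mul_right key (by positivity)

lemma quarter_le (v : ℕ) (hv : 2 ≤ v) : (1/4 : ℝ) ≤ (1 - 1/(v:ℝ))^v := by
  have hv0 : (0:ℝ) < v := by exact_mod_cast Nat.lt_of_lt_of_le (by norm_num) hv
  obtain ⟨w, rfl⟩ : ∃ w, v = w + 2 := ⟨v - 2, by omega⟩
  have h := aux_nat w
  have hR : ((w:ℝ)+2)^(w+2) ≤ 4*((w:ℝ)+1)^(w+2) := by exact_mod_cast h
  have hrw : (1 - 1/((w+2:ℕ):ℝ)) = ((w:ℝ)+1)/((w:ℝ)+2) := by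
    push_cast; field_simp; ring
  rw [hrw, div_pow, le_div_iff₀ (by positivity)]
  linarith

theorem stmt_19 {p : ℕ} (hp : p.Prime) (v : ℕ) (k : Fin v → ℕ)
    (hpos : ∀ i, 0 < k i) (hbig : ∀ i, (v : ℕ) ≤ p ^ k i) :
    (p : ℝ) ^ (∑ i, k i) / (p : ℝ) ^ 2 ≤ ∏ i, ((p : ℝ) ^ k i - 1) ∧
    ∏ i, ((p : ℝ) ^ k i + 1) ≤ (p : ℝ) ^ (∑ i, k i) * (p : ℝ) ^ 2 := by
  have hp2 : (2:ℝ) ≤ p := by exact_mod_cast hp.two_le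
  have hp0 : (0:ℝ) < p := by linarith
  have hpk0 : ∀ i, (0:ℝ) < (p:ℝ) ^ k i := fun i => by positivity
  have hpk2 : ∀ i, (2:ℝ) ≤ (p:ℝ) ^ k i := by
    intro i
    calc (2:ℝ) ≤ (p:ℝ) := hp2
      _ ≤ (p:ℝ) ^ k i := le_self_pow₀ (by linarith) (hpos i).ne'
  have hbigR : ∀ i, (v:ℝ) ≤ (p:ℝ) ^ k i := by
    intro i
    have := hbig i
    calc (v:ℝ) ≤ ((p ^ k i : ℕ) : ℝ) := by exact_mod_cast this
      _ = (p:ℝ) ^ k i := by push_cast; ring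
  have hpsum : (0:ℝ) < (p:ℝ) ^ (∑ i, k i) := by positivity
  have hp4 : (4:ℝ) ≤ (p:ℝ)^2 := by nlinarith
  -- product factorizations
  have hprod : ∏ i, (p:ℝ) ^ k i = (p:ℝ) ^ (∑ i, k i) := by
    rw [Finset.prod_pow_eq_pow_sum]
  constructor
  · -- lower bound
    have key : 1/(p:ℝ)^2 ≤ ∏ i, (1 - 1/(p:ℝ) ^ k i) := by
      rcases Nat.lt_or_ge v 2 with hv | hv
      · interval_cases v
        · simp only [Finset.univ_eq_empty, Finset.prod_empty]
          rw [div_le_one (by positivity)]; nlinarith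
        · rw [Fin.prod_univ_one]
          have h2 := hpk2 0
          have : 1/(p:ℝ) ^ k 0 ≤ 1/2 := by
            rw [div_le_div_iff₀ (hpk0 0) (by norm_num)]; linarith
          have h14 : 1/(p:ℝ)^2 ≤ 1/4 := by
            rw [div_le_div_iff₀ (by positivity) (by norm_num)]; linarith
          linarith
      · have hv0 : (0:ℝ) < v := by
          exact_mod_cast Nat.lt_of_lt_of_le (by norm_num) hv
        calc 1/(p:ℝ)^2 ≤ 1/4 := by
              rw [div_le_div_iff₀ (by positivity) (by norm_num)]; linarith
          _ ≤ (1 - 1/(v:ℝ))^v := quarter_le v hv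
          _ = ∏ _i : Fin v, (1 - 1/(v:ℝ)) := by
              rw [Finset.prod_const, Finset.card_univ, Fintype.card_fin]
          _ ≤ ∏ i, (1 - 1/(p:ℝ) ^ k i) := by
              apply Finset.prod_le_prod
              · intro i _
                have h2v : (2:ℝ) ≤ v := by exact_mod_cast hv
                have : 1/(v:ℝ) ≤ 1/2 := by
                  rw [div_le_div_iff₀ hv0 (by norm_num)]; linarith
                linarith
              · intro i _
                have : 1/(p:ℝ) ^ k i ≤ 1/(v:ℝ) := by
                  rw [div_le_div_iff₀ (hpk0 i) hv0]
                  have := hbigR i; linarith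
                linarith
    have hfac : ∏ i, ((p:ℝ) ^ k i - 1)
        = ((p:ℝ) ^ (∑ i, k i)) * ∏ i, (1 - 1/(p:ℝ) ^ k i) := by
      rw [← hprod, ← Finset.prod_mul_distrib]
      apply Finset.prod_congr rfl
      intro i _
      field_simp
    rw [hfac, div_eq_mul_inv, ← one_div]
    exact mul_le_mul_of_nonneg_left key hpsum.le
  · -- upper bound
    have hsum1 : ∑ i, 1/(p:ℝ) ^ k i ≤ 1 := by
      rcases Nat.eq_zero_or_pos v with rfl | hv
      · simp
      · have hv0 : (0:ℝ) < v := by exact_mod_cast hv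
        calc ∑ i, 1/(p:ℝ) ^ k i ≤ ∑ _i : Fin v, 1/(v:ℝ) := by
              apply Finset.sum_le_sum
              intro i _
              rw [div_le_div_iff₀ (hpk0 i) hv0]
              have := hbigR i; linarith
          _ = v * (1/(v:ℝ)) := by
              rw [Finset.sum_const, Finset.card_univ, Fintype.card_fin]; simp
          _ = 1 := by field_simp
    have key : ∏ i, (1 + 1/(p:ℝ) ^ k i) ≤ (p:ℝ)^2 := by
      calc ∏ i, (1 + 1/(p:ℝ) ^ k i) ≤ ∏ i, Real.exp (1/(p:ℝ) ^ k i) := by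
            apply Finset.prod_le_prod
            · intro i _; positivity
            · intro i _
              have := Real.add_one_le_exp (1/(p:ℝ) ^ k i)
              linarith
        _ = Real.exp (∑ i, 1/(p:ℝ) ^ k i) := by rw [Real.exp_sum]
        _ ≤ Real.exp 1 := Real.exp_le_exp.mpr hsum1
        _ ≤ 4 := by
            have := Real.exp_one_lt_d9
            linarith
        _ ≤ (p:ℝ)^2 := hp4
    have hfac : ∏ i, ((p:ℝ) ^ k i + 1)
        = ((p:ℝ) ^ (∑ i, k i)) * ∏ i, (1 + 1/(p:ℝ) ^ k i) := by
      rw [← hprod, ← Finset.prod_mul_distrib]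
      apply Finset.prod_congr rfl
      intro i _
      field_simp
    rw [hfac]
    exact mul_le_mul_of_nonneg_left key hpsum.le
end
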